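/- arXiv:math/0412026 — 6 statements merged into one kernel-verified Lean document; each statement's English description precedes it below -/
import Mathlib

section
/- Let p ⊂ R_2 = ℤ[u₁^{±1}, u₂^{±1}] be a non-principal prime ideal with p ∩ ℤ = {0}. Then the field of fractions K of R_2/p is an algebraic number field; that is, K is a finite-dimensional vector space over ℚ, and in particular K is isomorphic as an additive group to ℚ^n for some n ≥ 1. -/
/-- `R₂ = ℤ[u₁^{±1}, u₂^{±1}]`, the Laurent polynomial ring in two variables,
realized as the group algebra of `ℤ²` over `ℤ`. -/
abbrev R2 : Type := AddMonoidAlgebra ℤ (Fin 2 → ℤ)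

/-!
For `i ≠ j`, the evaluation `ℤ[X][Y] → R₂`, `X ↦ uᵢ`, `Y ↦ uⱼ`, is surjective up to the units
`(uᵢ uⱼ)ⁿ`, so a prime `p` of `R₂` is principal as soon as its preimage `q` in `ℤ[X][Y]` is.
If `q` met no nonzero polynomial in `X` alone, it would survive in the localization `ℚ(X)[Y]`,
a principal ideal domain, which forces a prime of the UFD `ℤ[X][Y]` to be principal. So a
non-principal `p` contains some nonzero `f(uᵢ)`: both `uᵢ` are algebraic over `ℤ` modulo `p`.
Since `p ∩ ℤ = 0`, the fraction field of `R₂/p` contains `ℚ`, and it is generated over `ℚ` by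
these two algebraic elements.
-/

open Polynomial AddMonoidAlgebra

theorem Ideal.IsPrime.isPrincipal_of_isLocalization {R : Type*} [CommRing R] [IsDomain R]
    [UniqueFactorizationMonoid R] (S : Submonoid R) (L : Type*) [CommRing L]
    [IsPrincipalIdealRing L] [Algebra R L] [IsLocalization S L] {q : Ideal R} (hq : q.IsPrime)
    (hqS : Disjoint (S : Set R) q) : q.IsPrincipal := by
  rcases eq_or_ne q ⊥ with rfl | hq0
  · exact bot_isPrincipal
  have hS : S ≤ nonZeroDivisors R := le_nonZeroDivisors_of_noZeroDivisors fun h0 =>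
    hqS.notMem_of_mem_left h0 q.zero_mem
  have : IsDomain L := IsLocalization.isDomain_of_le_nonZeroDivisors L hS
  -- `(π) ⊆ q` for a prime `π`; both stay prime in `L`, where `(π)` is maximal
  obtain ⟨π, hπq, hπ⟩ := hq.exists_mem_prime_of_ne_bot hq0
  have hπp : (Ideal.span {π}).IsPrime := (Ideal.span_singleton_prime hπ.ne_zero).mpr hπ
  have hπle : Ideal.span {π} ≤ q := (Ideal.span_singleton_le_iff_mem _).mpr hπq
  have hπS : Disjoint (S : Set R) (Ideal.span {π}) := hqS.mono_right hπle
  have := IsLocalization.isPrime_of_isPrime_disjoint S L _ hπp hπS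
  have hqL := IsLocalization.isPrime_of_isPrime_disjoint S L _ hq hqS
  have hπL0 : (Ideal.span {π}).map (algebraMap R L) ≠ ⊥ := by
    rw [Ideal.map_span, Set.image_singleton, Ne, Ideal.span_singleton_eq_bot,
      map_eq_zero_iff _ (IsLocalization.injective L hS)]
    exact hπ.ne_zero
  have hmap := (IsPrime.to_maximal_ideal hπL0).eq_of_le hqL.ne_top (Ideal.map_mono hπle)
  have := congrArg (Ideal.under R) hmap
  rw [IsLocalization.under_map_of_isPrime_disjoint S L hπp hπS,
    IsLocalization.under_map_of_isPrime_disjoint S L hq hqS] at this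
  exact this ▸ ⟨⟨π, rfl⟩⟩

theorem Ideal.map_comap_eq_of_forall_exists_isUnit_mul_mem_range {A B : Type*} [CommRing A]
    [CommRing B] (f : A →+* B) (hf : ∀ b, ∃ v, IsUnit v ∧ v * b ∈ f.range) (I : Ideal B) :
    (I.comap f).map f = I := by
  refine le_antisymm Ideal.map_comap_le fun b hb => ?_
  obtain ⟨v, hv, a, ha⟩ := hf b
  have haI : a ∈ I.comap f := by
    rw [Ideal.mem_comap, ha]
    exact I.mul_mem_left v hb
  rw [← hv.unit.inv_mul_cancel_left b]
  exact Ideal.mul_mem_left _ _ (ha ▸ Ideal.mem_map_of_mem f haI)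

theorem Ideal.Quotient.charZero_of_forall_intCast_mem {R : Type*} [CommRing R] (I : Ideal R)
    (hI : ∀ m : ℤ, (m : R) ∈ I → m = 0) : CharZero (R ⧸ I) :=
  charZero_of_injective_algebraMap (R := ℤ) <| (injective_iff_map_eq_zero _).2 fun m hm =>
    hI m <| Ideal.Quotient.eq_zero_iff_mem.mp <| by simpa using hm

theorem Polynomial.eval₂_mem {R S σ : Type*} [Semiring R] [CommSemiring S] [SetLike σ S]
    [SubsemiringClass σ S] {s : σ} {f : R →+* S} {x : S} (hf : ∀ r, f r ∈ s) (hx : x ∈ s)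
    (g : R[X]) : g.eval₂ f x ∈ s := by
  rw [eval₂_eq_sum]
  exact sum_mem fun n _ => mul_mem (hf _) (pow_mem hx n)

theorem finiteDimensional_of_forall_algebraMap_mem_adjoin {A K : Type*} [CommRing A] [Field K]
    [CharZero K] [Algebra A K] [IsFractionRing A K] {s : Set A} [Finite s]
    (hs : ∀ a ∈ s, IsAlgebraic ℤ a)
    (hA : ∀ a : A, algebraMap A K a ∈ IntermediateField.adjoin ℚ (algebraMap A K '' s)) :
    FiniteDimensional ℚ K := by
  have : FiniteDimensional ℚ (IntermediateField.adjoin ℚ (algebraMap A K '' s)) := by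
    refine IntermediateField.finiteDimensional_adjoin ?_
    rintro _ ⟨a, ha, rfl⟩
    exact ((hs a ha).algebraMap.extendScalars (algebraMap ℤ ℚ).injective_int).isIntegral
  have htop : IntermediateField.adjoin ℚ (algebraMap A K '' s) = ⊤ := by
    refine eq_top_iff.mpr fun z _ => ?_
    obtain ⟨a, b, -, rfl⟩ := IsFractionRing.div_surjective (A := A) z
    exact div_mem (hA a) (hA b)
  rw [htop] at this
  exact IntermediateField.topEquiv.toLinearEquiv.finiteDimensional

theorem Fin.eq_or_eq_of_ne {i j : Fin 2} (hij : i ≠ j) (k : Fin 2) : k = i ∨ k = j := by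
  omega

noncomputable section

namespace R2

def u (i : Fin 2) : R2 := single (Pi.single i 1) 1

theorem isUnit_u (i : Fin 2) : IsUnit (u i) :=
  IsUnit.of_mul_eq_one (single (-Pi.single i 1) 1) <| by
    rw [u, single_mul_single, add_neg_cancel, mul_one, one_def]

theorem u_mul_u {i j : Fin 2} (hij : i ≠ j) : u i * u j = single 1 1 := by
  rw [u, u, single_mul_single, mul_one]
  congr 1
  ext k
  rcases Fin.eq_or_eq_of_ne hij k with rfl | rfl <;> simp [hij, hij.symm]

def polyEval (i j : Fin 2) : ℤ[X][X] →+* R2 :=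
  eval₂RingHom (eval₂RingHom (Int.castRingHom R2) (u i)) (u j)

theorem polyEval_monomial (i j : Fin 2) (r : ℤ) (c d : ℕ) :
    polyEval i j (C (C r * X ^ c) * X ^ d)
      = single (c • Pi.single i 1 + d • Pi.single j 1) r := by
  rw [polyEval, coe_eval₂RingHom, eval₂_mul, eval₂_C, eval₂_pow, eval₂_X, coe_eval₂RingHom,
    eval₂_mul, eval₂_C, eval₂_pow, eval₂_X, eq_intCast, intCast_def, u, u, single_pow, single_pow,
    single_mul_single, single_mul_single]
  simp

theorem range_polyEval_le {i j : Fin 2} {T : Subring R2} (hi : u i ∈ T) (hj : u j ∈ T) :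
    (polyEval i j).range ≤ T := by
  rintro _ ⟨g, rfl⟩
  exact eval₂_mem (eval₂_mem (fun m => intCast_mem T m) hi) hj g

theorem single_mem_range_polyEval {i j : Fin 2} (hij : i ≠ j) {a : Fin 2 → ℤ} (ha : 0 ≤ a)
    (r : ℤ) : single a r ∈ (polyEval i j).range := by
  refine ⟨C (C r * X ^ (a i).toNat) * X ^ (a j).toNat, ?_⟩
  rw [polyEval_monomial]
  congr 1
  ext k
  rcases Fin.eq_or_eq_of_ne hij k with rfl | rfl <;>
    simp [hij, hij.symm, Int.toNat_of_nonneg (ha _)]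

theorem exists_pow_mul_mem_range_polyEval {i j : Fin 2} (hij : i ≠ j) (z : R2) :
    ∃ n : ℕ, (u i * u j) ^ n * z ∈ (polyEval i j).range := by
  have hw : u i * u j ∈ (polyEval i j).range := ⟨X * C X, by simp [polyEval]⟩
  induction z using AddMonoidAlgebra.induction_linear with
  | zero => exact ⟨0, by simp⟩
  | add z₁ z₂ h₁ h₂ =>
    obtain ⟨n₁, h₁⟩ := h₁
    obtain ⟨n₂, h₂⟩ := h₂
    refine ⟨n₁ + n₂, ?_⟩
    rw [show (u i * u j) ^ (n₁ + n₂) * (z₁ + z₂)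
      = (u i * u j) ^ n₂ * ((u i * u j) ^ n₁ * z₁) + (u i * u j) ^ n₁ * ((u i * u j) ^ n₂ * z₂) by
        ring]
    exact add_mem (mul_mem (pow_mem hw _) h₁) (mul_mem (pow_mem hw _) h₂)
  | single a r =>
    refine ⟨(a 0).natAbs + (a 1).natAbs, ?_⟩
    rw [u_mul_u hij, single_pow, single_mul_single, one_pow, one_mul]
    refine single_mem_range_polyEval hij (fun k => ?_) r
    simp only [Pi.zero_apply, Pi.add_apply, nsmul_eq_mul, mul_one, Pi.natCast_apply]
    fin_cases k <;> simp only [Fin.zero_eta, Fin.mk_one] <;> omega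

theorem map_mem_of_map_u_mem {K : Type*} [Field K] (ψ : R2 →+* K) {E : Subfield K}
    (hE : ∀ i, ψ (u i) ∈ E) (z : R2) : ψ z ∈ E := by
  have h01 : (0 : Fin 2) ≠ 1 := by decide
  obtain ⟨n, hn⟩ := exists_pow_mul_mem_range_polyEval h01 z
  have hw : ψ (u 0 * u 1) ≠ 0 := (((isUnit_u 0).mul (isUnit_u 1)).map ψ).ne_zero
  have hT := range_polyEval_le (T := E.toSubring.comap ψ) (hE 0) (hE 1) hn
  rw [Subring.mem_comap, map_mul, map_pow] at hT
  rw [← inv_mul_cancel_left₀ (pow_ne_zero n hw) (ψ z)]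
  exact mul_mem (inv_mem (pow_mem (map_mul ψ _ _ ▸ mul_mem (hE 0) (hE 1)) n)) hT

attribute [local instance] Polynomial.algebra Polynomial.isLocalization in
theorem isAlgebraic_mk_u {p : Ideal R2} (hp : p.IsPrime) (hnp : ¬p.IsPrincipal) {i j : Fin 2}
    (hij : i ≠ j) : IsAlgebraic ℤ (Ideal.Quotient.mk p (u i)) := by
  set q := p.comap (polyEval i j)
  have hpq : q.map (polyEval i j) = p := Ideal.map_comap_eq_of_forall_exists_isUnit_mul_mem_range
    _ (fun z => let ⟨n, hn⟩ := exists_pow_mul_mem_range_polyEval hij z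
      ⟨_, ((isUnit_u i).mul (isUnit_u j)).pow n, hn⟩) p
  -- `ℤ[X][Y]` localized at the nonzero elements of `ℤ[X]` is `ℚ(X)[Y]`
  by_cases hqS : Disjoint ((nonZeroDivisors ℤ[X]).map C : Set ℤ[X][X]) q
  · exact absurd (hpq ▸ ((hp.comap (polyEval i j)).isPrincipal_of_isLocalization _
      (FractionRing ℤ[X])[X] hqS).map_ringHom (polyEval i j)) hnp
  · obtain ⟨_, ⟨f, hf, rfl⟩, hfq⟩ := Set.not_disjoint_iff.mp hqS
    refine ⟨f, nonZeroDivisors.ne_zero hf, ?_⟩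
    have hCf : polyEval i j (C f) = aeval (u i) f := by
      rw [polyEval, coe_eval₂RingHom, eval₂_C, coe_eval₂RingHom, aeval_def]
      congr
    rw [← Ideal.Quotient.algebraMap_eq, aeval_algebraMap_apply, ← hCf, Ideal.Quotient.algebraMap_eq,
      Ideal.Quotient.eq_zero_iff_mem]
    exact hfq

end R2

end

/-- If `p ⊂ R₂` is a non-principal prime ideal with `p ∩ ℤ = {0}`,
then the field of fractions `K` of `R₂/p` is an algebraic number field: `K` is a
finite-dimensional `ℚ`-vector space, i.e. `K` is isomorphic as an additive group to `ℚⁿ`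
for some `n ≥ 1`. -/
theorem stmt2 (p : Ideal R2) (hp : p.IsPrime) (hnp : ¬p.IsPrincipal)
    (hz : ∀ m : ℤ, (m : R2) ∈ p → m = 0) :
    ∃ n : ℕ, 1 ≤ n ∧ Nonempty (FractionRing (R2 ⧸ p) ≃+ (Fin n → ℚ)) := by
  have := hp
  have : CharZero (R2 ⧸ p) := Ideal.Quotient.charZero_of_forall_intCast_mem p hz
  let K := FractionRing (R2 ⧸ p)
  let ψ : R2 →+* K := (algebraMap (R2 ⧸ p) K).comp (Ideal.Quotient.mk p)
  let s : Set (R2 ⧸ p) := {Ideal.Quotient.mk p (R2.u 0), Ideal.Quotient.mk p (R2.u 1)}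
  have hs : ∀ a ∈ s, IsAlgebraic ℤ a := by
    rintro x (rfl | rfl)
    exacts [R2.isAlgebraic_mk_u hp hnp zero_ne_one, R2.isAlgebraic_mk_u hp hnp one_ne_zero]
  let E := IntermediateField.adjoin ℚ (algebraMap (R2 ⧸ p) K '' s)
  have hu (i : Fin 2) : ψ (R2.u i) ∈ E := by
    refine IntermediateField.subset_adjoin _ _ (Set.mem_image_of_mem _ ?_)
    fin_cases i <;> simp [s]
  have hA (a : R2 ⧸ p) : algebraMap (R2 ⧸ p) K a ∈ E := by
    obtain ⟨z, rfl⟩ := Ideal.Quotient.mk_surjective a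
    exact R2.map_mem_of_map_u_mem ψ (E := E.toSubfield) hu z
  have : FiniteDimensional ℚ K := finiteDimensional_of_forall_algebraMap_mem_adjoin hs hA
  exact ⟨_, Module.finrank_pos, ⟨(Module.finBasis ℚ K).equivFun.toAddEquiv⟩⟩
end

section
/- Let d ≥ 1 and let p ⊂ R_d = ℤ[u₁^{±1},…,u_d^{±1}] be a nonzero, non-principal prime ideal. Then p has nonzero intersection with the subring R_{d−1} = ℤ[u₁^{±1},…,u_{d−1}^{±1}] (the image of the Laurent polynomial ring in the first d−1 variables under the natural inclusion into R_d); that is, R_{d−1} ∩ p ≠ {0}. -/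
/-- `R_d = ℤ[u₁^{±1},…,u_d^{±1}]`, the Laurent polynomial ring in `d` variables,
realized as the group algebra of `ℤ^d` over `ℤ`. -/
abbrev Rd (d : ℕ) : Type := AddMonoidAlgebra ℤ (Fin d → ℤ)

/-- The embedding `ℤ^{d-1} → ℤ^d` (extension by zero in the last coordinate). -/
def zEmb (d : ℕ) : (Fin (d - 1) → ℤ) →+ (Fin d → ℤ) where
  toFun v := fun i => if h : (i : ℕ) < d - 1 then v ⟨i, h⟩ else 0
  map_zero' := by
    funext i
    by_cases h : (i : ℕ) < d - 1 <;> simp [h]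
  map_add' a b := by
    funext i
    by_cases h : (i : ℕ) < d - 1 <;> simp [h]

/-- The inclusion ring homomorphism `R_{d-1} → R_d`. -/
noncomputable def laurentIncl (d : ℕ) : Rd (d - 1) →+* Rd d :=
  AddMonoidAlgebra.mapDomainRingHom ℤ (zEmb d)

/-!
Write `R_d = R_{d-1}[T;T⁻¹]` with `T` the last variable; since `ℤ` is a UFD and a Laurent
polynomial ring is a localization of a polynomial ring, every `R_d` is a UFD. If `p` met
`R_{d-1}` only in `0`, its contraction `q` to `R_{d-1}[T]` would be a nonzero prime meeting the
coefficient ring only in `0`. A prime factor `π ∈ q` of an element of `q` of least degree then has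
positive least degree, and cancelling leading terms (by induction on degree) shows
`π ∣ lc(π) g`, hence `π ∣ g`, for every `g ∈ q`. So `q = (π)`, and `p`, generated by the image
of `q`, would be principal.
-/

theorem Ideal.IsPrime.exists_prime_mem_dvd {R : Type*} [CommSemiring R]
    [UniqueFactorizationMonoid R] {I : Ideal R} (hI : I.IsPrime) {a : R} (ha : a ∈ I)
    (ha0 : a ≠ 0) : ∃ π ∈ I, Prime π ∧ π ∣ a := by
  obtain ⟨u, hu⟩ := UniqueFactorizationMonoid.factors_prod ha0
  rw [← hu, Ideal.mul_unit_mem_iff_mem _ u.isUnit] at ha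
  obtain ⟨π, hπ, hπI⟩ := (hI.multiset_prod_mem_iff_exists_mem _).1 ha
  exact ⟨π, hπI, UniqueFactorizationMonoid.prime_of_factor π hπ,
    UniqueFactorizationMonoid.dvd_of_mem_factors hπ⟩

namespace Polynomial

variable {R : Type*} [CommRing R] [IsDomain R]

theorem dvd_of_mem_of_forall_natDegree_le {I : Ideal R[X]} {π : R[X]} (hπ : Prime π)
    (hπI : π ∈ I) (hπ0 : 0 < π.natDegree) (hmin : ∀ f ∈ I, f ≠ 0 → π.natDegree ≤ f.natDegree)
    {g : R[X]} (hg : g ∈ I) : π ∣ g := by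
  induction g using degree_lt_wf.induction with
  | _ g ih =>
  rcases eq_or_ne g 0 with rfl | hg0
  · exact dvd_zero π
  set e := g.natDegree - π.natDegree
  set r := C π.leadingCoeff * g - C g.leadingCoeff * X ^ e * π
  have hlc : π.leadingCoeff ≠ 0 := leadingCoeff_ne_zero.2 hπ.ne_zero
  have hr : r ∈ I := I.sub_mem (I.mul_mem_left _ hg) (I.mul_mem_left _ hπI)
  have hlhs : (C π.leadingCoeff * g).degree = g.degree := degree_C_mul hlc
  have hrhs : (C g.leadingCoeff * X ^ e * π).degree = g.degree := by
    have := hmin g hg hg0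
    rw [degree_mul, degree_C_mul_X_pow e (leadingCoeff_ne_zero.2 hg0),
      degree_eq_natDegree hπ.ne_zero, degree_eq_natDegree hg0]
    norm_cast
    omega
  have hrg : r.degree < g.degree := by
    refine hlhs ▸ degree_sub_lt_left (hlhs.trans hrhs.symm) ?_ ?_
    · exact mul_ne_zero (C_ne_zero.2 hlc) hg0
    · rw [leadingCoeff_mul, leadingCoeff_mul, leadingCoeff_mul, leadingCoeff_C, leadingCoeff_C,
        leadingCoeff_X_pow, mul_one, mul_comm]
  have hdvd : π ∣ C π.leadingCoeff * g :=
    (dvd_sub_left (dvd_mul_left π _)).1 (ih r hrg hr)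
  refine (hπ.dvd_or_dvd hdvd).resolve_left fun h => ?_
  have := natDegree_le_of_dvd h (C_ne_zero.2 hlc)
  rw [natDegree_C] at this
  omega

theorem isPrincipal_of_comap_C_eq_bot [UniqueFactorizationMonoid R] {q : Ideal R[X]}
    (hq : q.IsPrime) (hq0 : q ≠ ⊥) (hqC : q.comap C = ⊥) : q.IsPrincipal := by
  obtain ⟨f, ⟨hfq, hf0⟩, hfmin⟩ := (measure natDegree).wf.has_min {f | f ∈ q ∧ f ≠ 0}
    (Submodule.exists_mem_ne_zero_of_ne_bot hq0)
  obtain ⟨π, hπq, hπ, hπf⟩ := hq.exists_prime_mem_dvd hfq hf0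
  have hmin : ∀ g ∈ q, g ≠ 0 → π.natDegree ≤ g.natDegree := fun g hg hg0 =>
    (natDegree_le_of_dvd hπf hf0).trans (not_lt.1 (hfmin g ⟨hg, hg0⟩))
  have hπ0 : 0 < π.natDegree := by
    refine Nat.pos_of_ne_zero fun h => hπ.ne_zero ?_
    rw [eq_C_of_natDegree_eq_zero h] at hπq ⊢
    have : π.coeff 0 ∈ q.comap C := hπq
    rw [hqC, Ideal.mem_bot] at this
    rw [this, map_zero]
  refine ⟨π, le_antisymm (fun g hg => ?_) ((Ideal.span_singleton_le_iff_mem _).2 hπq)⟩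
  exact Ideal.mem_span_singleton.2 (dvd_of_mem_of_forall_natDegree_le hπ hπq hπ0 hmin hg)

end Polynomial

namespace LaurentPolynomial

open Polynomial

variable {R : Type*} [CommRing R] [IsDomain R] [UniqueFactorizationMonoid R]

instance uniqueFactorizationMonoid : UniqueFactorizationMonoid R[T;T⁻¹] :=
  .of_isLocalization (.powers (X : R[X])) _

theorem isPrincipal_of_comap_C_eq_bot {P : Ideal R[T;T⁻¹]} (hP : P.IsPrime) (hP0 : P ≠ ⊥)
    (hPC : P.comap LaurentPolynomial.C = ⊥) : P.IsPrincipal := by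
  have hmap : (P.under R[X]).map (algebraMap R[X] R[T;T⁻¹]) = P :=
    IsLocalization.map_under (.powers X) _ P
  have hq0 : P.under R[X] ≠ ⊥ := by
    rintro hq
    rw [hq, Ideal.map_bot] at hmap
    exact hP0 hmap.symm
  have hqC : (P.under R[X]).comap Polynomial.C = ⊥ := by
    have hC : (algebraMap R[X] R[T;T⁻¹]).comp Polynomial.C = LaurentPolynomial.C :=
      RingHom.ext fun r => Polynomial.toLaurent_C r
    rwa [Ideal.under_def, Ideal.comap_comap, hC]
  exact hmap ▸ (Polynomial.isPrincipal_of_comap_C_eq_bot (hP.comap _) hq0 hqC).map_ringHom _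

end LaurentPolynomial

def Fin.snocAddEquiv (M : Type*) [AddCommMonoid M] (k : ℕ) :
    M × (Fin k → M) ≃+ (Fin (k + 1) → M) :=
  { Fin.snocEquiv fun _ => M with
    map_add' := fun a b => by
      ext i
      refine Fin.lastCases ?_ (fun i => ?_) i <;> simp }

theorem zEmb_succ (k : ℕ) (v : Fin k → ℤ) : zEmb (k + 1) v = Fin.snoc v 0 := by
  funext i
  refine Fin.lastCases ?_ (fun i => ?_) i <;> simp [zEmb]

noncomputable def laurentEquiv (k : ℕ) : Rd (k + 1) ≃+* LaurentPolynomial (Rd k) :=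
  (AddMonoidAlgebra.domCongr ℤ ℤ (Fin.snocAddEquiv ℤ k).symm).toRingEquiv.trans
    AddMonoidAlgebra.curryRingEquiv

theorem laurentEquiv_symm_comp_C (k : ℕ) :
    ((laurentEquiv k).symm : LaurentPolynomial (Rd k) →+* Rd (k + 1)).comp LaurentPolynomial.C =
      laurentIncl (k + 1) := by
  have h : (laurentEquiv k : Rd (k + 1) →+* LaurentPolynomial (Rd k)).comp (laurentIncl (k + 1)) =
      LaurentPolynomial.C := by
    apply AddMonoidAlgebra.ringHom_ext
    · intro r
      simp [laurentIncl, laurentEquiv, ← Prod.mk_zero_zero]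
    · intro (a : Fin k → ℤ)
      simp [laurentIncl, laurentEquiv, Fin.snocAddEquiv]
      rw [zEmb_succ]
      simp
  rw [← h, ← RingHom.comp_assoc, RingEquiv.symm_comp, RingHom.id_comp]

theorem laurentIncl_injective (k : ℕ) : Function.Injective (laurentIncl (k + 1)) := by
  rw [← laurentEquiv_symm_comp_C, RingHom.coe_comp, ← Polynomial.toLaurent_comp_C]
  exact (laurentEquiv k).symm.injective.comp
    (Polynomial.toLaurent_injective.comp Polynomial.C_injective)

instance Rd.uniqueFactorizationMonoid : ∀ n, UniqueFactorizationMonoid (Rd n)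
  | 0 => (AddMonoidAlgebra.uniqueRingEquiv _).toMulEquiv.symm.uniqueFactorizationMonoid inferInstance
  | n + 1 =>
    have := Rd.uniqueFactorizationMonoid n
    (laurentEquiv n).symm.toMulEquiv.uniqueFactorizationMonoid inferInstance

/-- For `d ≥ 1`, a nonzero non-principal prime ideal `p ⊂ R_d`
has nonzero intersection with the subring `R_{d-1} ⊂ R_d` (the image of the Laurent
polynomial ring in the first `d − 1` variables under the natural inclusion). -/
theorem stmt3 (d : ℕ) (hd : 1 ≤ d) (p : Ideal (Rd d)) (hp : p.IsPrime)
    (hbot : p ≠ ⊥) (hnp : ¬p.IsPrincipal) :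
    ∃ f : Rd d, f ≠ 0 ∧ f ∈ p ∧ f ∈ (laurentIncl d).range := by
  by_contra! hcon
  obtain ⟨k, rfl⟩ := Nat.exists_eq_add_of_le' hd
  set e := laurentEquiv k
  set P := p.comap (e.symm : LaurentPolynomial (Rd k) →+* Rd (k + 1))
  have hP0 : P ≠ ⊥ := by
    obtain ⟨x, hx, hx0⟩ := Submodule.exists_mem_ne_zero_of_ne_bot hbot
    exact (Submodule.ne_bot_iff _).2 ⟨e x, by simpa [P] using hx, by simpa using hx0⟩
  have hPC : P.comap LaurentPolynomial.C = ⊥ := by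
    rw [Ideal.comap_comap, laurentEquiv_symm_comp_C, eq_bot_iff]
    intro r hr
    by_contra hr0
    exact hcon _ ((map_ne_zero_iff _ (laurentIncl_injective k)).2 hr0) hr ⟨r, rfl⟩
  have hPprin := LaurentPolynomial.isPrincipal_of_comap_C_eq_bot (hp.comap _) hP0 hPC
  exact hnp (Ideal.IsPrincipal.of_comap _ e.symm.surjective p (hI := hPprin))
end

section
/- Let G be a compact metrizable abelian group equipped with a translation-invariant compatible metric ρ, and let T : G → G be a continuous group automorphism with finite topological entropy h_top(T) < ∞. Then T is asymptotically h-expansive: sup_{y ∈ G} h_top(T, A_t(y)) → 0 as t → 0⁺, where A_t(y) = {z ∈ G : ρ(T^k z, T^k y) ≤ t for all k ≥ 0}. -/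
/-!
Fix `c > 0`. If `F` is `3δ`-separated for the Bowen metric `d_n` and `E ⊆ A_δ(y)` is
`ε`-separated with `ε ≤ δ`, then the sums `F + E` are pairwise `ε`-apart, because `d_n` is
translation invariant and `A_δ(y)` has `d_n`-diameter at most `2δ`. Hence
`S_n(A_δ(y), ε) · S_n(G, 3δ) ≤ S_n(G, ε)`, so `(1/n) log S_n(A_δ(y), ε)` is at most
`(1/n) log S_n(G, ε) - (1/n) log S_n(G, 3δ)`. The first term is eventually below
`h_top(T) + c/2`. Coding orbits block by block gives `S_n(G, 6δ) ≤ S_m(G, 3δ)^q` whenever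
`n + 1 ≤ q (m + 1)`, so `log S_m(G, 3δ) / (m + 1) ≥ S(G, 6δ)` for every `m`, and
`S(G, 6δ) ≥ h_top(T) - c/2` once `δ` is small because `h_top(T) < ∞`. Thus
`h_top(T, A_δ(y)) ≤ c` for every `y`, and `A_t(y) ⊆ A_δ(y)` for `t ≤ δ`.
-/

open Filter ENNReal

noncomputable section

/-- The Bowen metric `d_n(x,y) = max_{0 ≤ k ≤ n} ρ(T^k x, T^k y)`. -/
def bowenDist {G : Type} [MetricSpace G] (T : G → G) (n : ℕ) (x y : G) : ℝ :=
  (Finset.range (n + 1)).sup' Finset.nonempty_range_add_one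
    fun k => dist (T^[k] x) (T^[k] y)

/-- `S_n(C, ε)`: the largest cardinality of an `ε`-separated subset of `C` with respect
to the Bowen metric `d_n` (as an extended nonnegative real; it is finite when the ambient
space is compact). -/
def sepCount {G : Type} [MetricSpace G] (T : G → G) (C : Set G) (n : ℕ) (ε : ℝ) : ℝ≥0∞ :=
  ⨆ (F : Finset G) (_ : ↑F ⊆ C ∧
    ∀ x ∈ F, ∀ y ∈ F, x ≠ y → ε ≤ bowenDist T n x y), (F.card : ℝ≥0∞)

/-- `S(C, ε) = limsup_n (1/n) log S_n(C, ε)`. -/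
def sepEntropy {G : Type} [MetricSpace G] (T : G → G) (C : Set G) (ε : ℝ) : ℝ≥0∞ :=
  Filter.limsup
    (fun n : ℕ => ENNReal.ofReal (Real.log (sepCount T C n ε).toReal / n)) Filter.atTop

/-- The topological entropy of `T` on the subset `C`,
`h_top(T, C) = lim_{ε → 0⁺} S(C, ε)`; since `S(C, ε)` is antitone in `ε`, this limit
equals the supremum over `ε > 0`. -/
def topEntropyOn {G : Type} [MetricSpace G] (T : G → G) (C : Set G) : ℝ≥0∞ :=
  ⨆ (ε : ℝ) (_ : 0 < ε), sepEntropy T C ε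

end

open Set Topology

section Bowen

variable {G : Type} [MetricSpace G] (T : G → G)

def bowenOrbit (n : ℕ) (x : G) : Fin (n + 1) → G := fun k => T^[k] x

lemma bowenDist_le_iff {n : ℕ} {x y : G} {r : ℝ} :
    bowenDist T n x y ≤ r ↔ ∀ k ≤ n, dist (T^[k] x) (T^[k] y) ≤ r := by
  simp [bowenDist, Finset.sup'_le_iff]

lemma bowenDist_lt_iff {n : ℕ} {x y : G} {r : ℝ} :
    bowenDist T n x y < r ↔ ∀ k ≤ n, dist (T^[k] x) (T^[k] y) < r := by
  simp [bowenDist, Finset.sup'_lt_iff]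

lemma dist_iterate_le_bowenDist {k n : ℕ} (hk : k ≤ n) (x y : G) :
    dist (T^[k] x) (T^[k] y) ≤ bowenDist T n x y :=
  (bowenDist_le_iff T).1 le_rfl k hk

lemma bowenDist_eq_dist (n : ℕ) (x y : G) :
    bowenDist T n x y = dist (bowenOrbit T n x) (bowenOrbit T n y) := by
  refine le_antisymm ((bowenDist_le_iff T).2 fun k hk => ?_) ?_
  · exact dist_le_pi_dist (bowenOrbit T n x) (bowenOrbit T n y) ⟨k, Nat.lt_succ_of_le hk⟩
  · refine (dist_pi_le_iff (dist_nonneg.trans (dist_iterate_le_bowenDist T le_rfl x y))).2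
      fun k => dist_iterate_le_bowenDist T (Nat.lt_succ_iff.1 k.2) x y

lemma continuous_bowenOrbit (hT : Continuous T) (n : ℕ) : Continuous (bowenOrbit T n) :=
  continuous_pi fun k => hT.iterate k

lemma bowenDist_lt_of_forall_lt {m n q : ℕ} (hn : n + 1 ≤ q * (m + 1)) {x y : G} {r : ℝ}
    (h : ∀ j < q, bowenDist T m (T^[j * (m + 1)] x) (T^[j * (m + 1)] y) < r) :
    bowenDist T n x y < r := by
  have hm : 0 < m + 1 := m.succ_pos
  refine (bowenDist_lt_iff T).2 fun k hk => ?_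
  have hj : k / (m + 1) < q := (Nat.div_lt_iff_lt_mul hm).2 (by omega)
  have hk' : k = k % (m + 1) + k / (m + 1) * (m + 1) := by
    rw [mul_comm]; exact (Nat.mod_add_div k (m + 1)).symm
  rw [hk', Function.iterate_add_apply, Function.iterate_add_apply]
  exact (dist_iterate_le_bowenDist T (Nat.lt_succ_iff.1 (Nat.mod_lt k hm)) _ _).trans_lt
    (h _ hj)

end Bowen

section Packing

variable {α X : Type*} [PseudoMetricSpace X] {f : α → X}

lemma exists_card_le_of_isCompact_range (hf : IsCompact (range f)) {ε : ℝ} (hε : 0 < ε) :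
    ∃ N : ℕ, ∀ F : Finset α,
      (∀ x ∈ F, ∀ y ∈ F, x ≠ y → ε ≤ dist (f x) (f y)) → F.card ≤ N := by
  obtain ⟨t, -, ht, hcover⟩ := finite_cover_balls_of_compact hf (half_pos hε)
  have hcenter : ∀ x, ∃ c ∈ ht.toFinset, dist (f x) c < ε / 2 := fun x => by
    simpa using hcover (mem_range_self x)
  choose c hct hc using hcenter
  refine ⟨ht.toFinset.card, fun F hF => Finset.card_le_card_of_injOn c (fun x _ => hct x) ?_⟩
  intro x hx y hy hxy
  by_contra hne
  refine (hF x hx y hy hne).not_gt ?_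
  calc dist (f x) (f y) ≤ dist (f x) (c x) + dist (f y) (c y) := by
        rw [hxy]; exact dist_triangle_right _ _ _
    _ < ε / 2 + ε / 2 := add_lt_add (hc x) (hc y)
    _ = ε := add_halves ε

/-- A separated set of maximal cardinality is spanning. -/
lemma exists_separated_spanning_finset (hf : IsCompact (range f)) {ε : ℝ} (hε : 0 < ε) :
    ∃ F : Finset α, (∀ x ∈ F, ∀ y ∈ F, x ≠ y → ε ≤ dist (f x) (f y)) ∧
      ∀ x, ∃ y ∈ F, dist (f y) (f x) < ε := by
  classical
  obtain ⟨N, hN⟩ := exists_card_le_of_isCompact_range hf hε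
  let S : Set ℕ := {c | ∃ F : Finset α,
    (∀ x ∈ F, ∀ y ∈ F, x ≠ y → ε ≤ dist (f x) (f y)) ∧ F.card = c}
  have hS : BddAbove S := ⟨N, by rintro _ ⟨F, hF, rfl⟩; exact hN F hF⟩
  have hS₀ : S.Nonempty := ⟨0, ∅, by simp, rfl⟩
  obtain ⟨F, hF, hcard⟩ := Nat.sSup_mem hS₀ hS
  refine ⟨F, hF, fun x => ?_⟩
  by_contra! hfar
  have hx : x ∉ F := fun hx => (hfar x hx).not_gt (by simpa using hε)
  have hsep : ∀ a ∈ insert x F, ∀ b ∈ insert x F, a ≠ b → ε ≤ dist (f a) (f b) := by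
    simp only [Finset.mem_insert]
    rintro a (rfl | ha) b (rfl | hb) hab
    exacts [absurd rfl hab, dist_comm (f a) (f b) ▸ hfar b hb, hfar a ha, hF a ha b hb hab]
  have := le_csSup hS ⟨insert x F, hsep, rfl⟩
  rw [Finset.card_insert_of_notMem hx, hcard] at this
  omega

end Packing

section Separated

variable {G : Type} [MetricSpace G] {T : G → G} {C C' : Set G} {n : ℕ} {ε ε' : ℝ}

def IsBowenSeparated (T : G → G) (C : Set G) (n : ℕ) (ε : ℝ) (F : Finset G) : Prop :=
  ↑F ⊆ C ∧ ∀ x ∈ F, ∀ y ∈ F, x ≠ y → ε ≤ bowenDist T n x y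

lemma card_le_sepCount {F : Finset G} (hF : IsBowenSeparated T C n ε F) :
    (F.card : ℝ≥0∞) ≤ sepCount T C n ε :=
  le_iSup₂ (f := fun F (_ : IsBowenSeparated T C n ε F) => (F.card : ℝ≥0∞)) F hF

lemma sepCount_le {a : ℝ≥0∞} (h : ∀ F, IsBowenSeparated T C n ε F → (F.card : ℝ≥0∞) ≤ a) :
    sepCount T C n ε ≤ a :=
  iSup₂_le h

lemma sepCount_mono (hC : C ⊆ C') (hε : ε' ≤ ε) : sepCount T C n ε ≤ sepCount T C' n ε' :=
  sepCount_le fun _ hF => card_le_sepCount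
    ⟨hF.1.trans hC, fun x hx y hy hxy => hε.trans (hF.2 x hx y hy hxy)⟩

lemma one_le_sepCount (hC : C.Nonempty) : 1 ≤ sepCount T C n ε := by
  obtain ⟨x, hx⟩ := hC
  simpa using card_le_sepCount (T := T) (n := n) (ε := ε) (F := {x}) ⟨by simpa using hx, by simp⟩

lemma sepCount_empty : sepCount T ∅ n ε = 0 :=
  nonpos_iff_eq_zero.1 <| sepCount_le fun F hF => by
    simp [Finset.coe_eq_empty.1 (subset_empty_iff.1 hF.1)]

variable [CompactSpace G]

lemma sepCount_ne_top (hT : Continuous T) (hε : 0 < ε) : sepCount T C n ε ≠ ⊤ := by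
  obtain ⟨N, hN⟩ := exists_card_le_of_isCompact_range
    (isCompact_range (continuous_bowenOrbit T hT n)) hε
  refine ne_top_of_le_ne_top (natCast_ne_top N) (sepCount_le fun F hF => ?_)
  exact Nat.cast_le.2 (hN F fun x hx y hy hxy => bowenDist_eq_dist T n x y ▸ hF.2 x hx y hy hxy)

lemma exists_bowenSeparated_spanning (hT : Continuous T) (hε : 0 < ε) :
    ∃ F : Finset G, IsBowenSeparated T univ n ε F ∧ ∀ x, ∃ y ∈ F, bowenDist T n y x < ε := by
  obtain ⟨F, hsep, hspan⟩ := exists_separated_spanning_finset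
    (isCompact_range (continuous_bowenOrbit T hT n)) hε
  simp only [← bowenDist_eq_dist] at hsep hspan
  exact ⟨F, ⟨subset_univ _, hsep⟩, hspan⟩

/-- Coding an `n`-orbit by the `ε`-spanning points of its blocks of length `m + 1`. -/
lemma sepCount_two_mul_le_pow (hT : Continuous T) (hε : 0 < ε) {m q : ℕ}
    (hn : n + 1 ≤ q * (m + 1)) :
    sepCount T univ n (2 * ε) ≤ sepCount T univ m ε ^ q := by
  obtain ⟨E, hE, hspan⟩ := exists_bowenSeparated_spanning (n := m) hT hε
  choose c hcE hc using hspan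
  let code : G → Fin q → G := fun x j => c (T^[j * (m + 1)] x)
  refine sepCount_le fun F hF => ?_
  have hinj : InjOn code F := by
    intro x hx y hy hxy
    by_contra hne
    refine (hF.2 x hx y hy hne).not_gt (bowenDist_lt_of_forall_lt T hn fun j hj => ?_)
    have hcode : c (T^[j * (m + 1)] x) = c (T^[j * (m + 1)] y) := congrFun hxy ⟨j, hj⟩
    calc _ ≤ bowenDist T m (c (T^[j * (m + 1)] x)) (T^[j * (m + 1)] x)
          + bowenDist T m (c (T^[j * (m + 1)] y)) (T^[j * (m + 1)] y) := by
          simp only [bowenDist_eq_dist, hcode]; exact dist_triangle_left _ _ _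
      _ < ε + ε := add_lt_add (hc _) (hc _)
      _ = 2 * ε := (two_mul ε).symm
  have hcard : F.card ≤ E.card ^ q := by
    simpa using Finset.card_le_card_of_injOn code
      (fun x _ => Fintype.mem_piFinset.2 fun j => hcE _) hinj
  calc (F.card : ℝ≥0∞) ≤ (E.card : ℝ≥0∞) ^ q := by exact_mod_cast hcard
    _ ≤ sepCount T univ m ε ^ q := pow_le_pow_left' (card_le_sepCount hE) q

end Separated

lemma ENNReal.log_toReal_le_log_toReal {a b : ℝ≥0∞} (ha : a ≠ 0) (hab : a ≤ b) (hb : b ≠ ⊤) :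
    Real.log a.toReal ≤ Real.log b.toReal :=
  Real.log_le_log (toReal_pos ha (ne_top_of_le_ne_top hb hab)) (toReal_mono hb hab)

section Entropy

variable {G : Type} [MetricSpace G] {T : G → G} {C C' : Set G} {n : ℕ} {ε ε' : ℝ}

noncomputable def logSepCount (T : G → G) (C : Set G) (n : ℕ) (ε : ℝ) : ℝ :=
  Real.log (sepCount T C n ε).toReal

lemma logSepCount_nonneg : 0 ≤ logSepCount T C n ε := by
  rcases C.eq_empty_or_nonempty with rfl | hC
  · simp [logSepCount, sepCount_empty]
  rcases eq_or_ne (sepCount T C n ε) ⊤ with htop | htop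
  · simp [logSepCount, htop]
  · exact Real.log_nonneg (by simpa using toReal_mono htop (one_le_sepCount hC))

lemma sepEntropy_le_ofReal {c : ℝ} (h : ∀ᶠ n : ℕ in atTop, logSepCount T C n ε / n ≤ c) :
    sepEntropy T C ε ≤ ENNReal.ofReal c :=
  limsup_le_of_le (h := h.mono fun _ hn => ofReal_le_ofReal hn)

lemma eventually_logSepCount_div_lt {c : ℝ} (h : sepEntropy T C ε < ENNReal.ofReal c) :
    ∀ᶠ n : ℕ in atTop, logSepCount T C n ε / n < c :=
  (eventually_lt_of_limsup_lt h).mono fun n hn =>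
    (ofReal_lt_ofReal_iff_of_nonneg (div_nonneg logSepCount_nonneg n.cast_nonneg)).1 hn

lemma exists_topEntropyOn_le_sepEntropy_add (h : topEntropyOn T C ≠ ⊤) {r : ℝ≥0∞}
    (hr : r ≠ 0) : ∃ ε, 0 < ε ∧ topEntropyOn T C ≤ sepEntropy T C ε + r := by
  rcases eq_or_ne (topEntropyOn T C) 0 with h0 | h0
  · exact ⟨1, one_pos, by simp [h0]⟩
  obtain ⟨ε, hε, hlt⟩ : ∃ ε, 0 < ε ∧ topEntropyOn T C - r < sepEntropy T C ε := by
    have := ENNReal.sub_lt_self h h0 hr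
    conv_rhs at this => rw [topEntropyOn]
    simpa only [lt_iSup_iff, exists_prop] using this
  exact ⟨ε, hε, tsub_le_iff_right.1 hlt.le⟩

variable [CompactSpace G]

lemma logSepCount_mono (hT : Continuous T) (hε' : 0 < ε') (hC : C ⊆ C') (hε : ε' ≤ ε) :
    logSepCount T C n ε ≤ logSepCount T C' n ε' := by
  rcases eq_or_ne (sepCount T C n ε) 0 with h0 | h0
  · simpa [logSepCount, h0] using logSepCount_nonneg
  · exact log_toReal_le_log_toReal h0 (sepCount_mono hC hε) (sepCount_ne_top hT hε')

lemma sepEntropy_mono (hT : Continuous T) (hε' : 0 < ε') (hC : C ⊆ C') (hε : ε' ≤ ε) :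
    sepEntropy T C ε ≤ sepEntropy T C' ε' :=
  limsup_le_limsup <| .of_forall fun n => ofReal_le_ofReal <|
    div_le_div_of_nonneg_right (logSepCount_mono hT hε' hC hε) n.cast_nonneg

lemma topEntropyOn_mono (hT : Continuous T) (hC : C ⊆ C') :
    topEntropyOn T C ≤ topEntropyOn T C' :=
  iSup₂_mono fun _ hε => sepEntropy_mono hT hε hC le_rfl

lemma logSepCount_two_mul_div_le [Nonempty G] (hT : Continuous T) (hε : 0 < ε) {m : ℕ}
    (hn : 1 ≤ n) :
    logSepCount T univ n (2 * ε) / n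
      ≤ logSepCount T univ m ε / (m + 1) + logSepCount T univ m ε / n := by
  set L := logSepCount T univ m ε
  set q := n / (m + 1) + 1
  have hq : n + 1 ≤ q * (m + 1) := by
    simpa [q, add_mul] using Nat.lt_div_mul_add (a := n) m.succ_pos
  have hlog : logSepCount T univ n (2 * ε) ≤ q * L := by
    calc _ ≤ Real.log (sepCount T univ m ε ^ q).toReal :=
          log_toReal_le_log_toReal (one_pos.trans_le (one_le_sepCount univ_nonempty)).ne'
            (sepCount_two_mul_le_pow hT hε hq) (pow_ne_top (sepCount_ne_top hT hε))
      _ = q * L := by rw [toReal_pow, Real.log_pow]; rfl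
  have hqle : (q : ℝ) ≤ n / (m + 1) + 1 := by
    simpa [q] using Nat.cast_div_le (α := ℝ) (m := n) (n := m + 1)
  have hL : 0 ≤ L := logSepCount_nonneg
  have hn' : (0 : ℝ) < n := by exact_mod_cast hn
  calc logSepCount T univ n (2 * ε) / n ≤ q * L / n := by gcongr
    _ ≤ (n / (m + 1) + 1) * L / n := by gcongr
    _ = L / (m + 1) + L / n := by field_simp

lemma sepEntropy_two_mul_le [Nonempty G] (hT : Continuous T) (hε : 0 < ε) (m : ℕ) :
    sepEntropy T univ (2 * ε) ≤ ENNReal.ofReal (logSepCount T univ m ε / (m + 1)) := by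
  set L := logSepCount T univ m ε
  have hlim : Tendsto (fun n : ℕ => ENNReal.ofReal (L / (m + 1) + L / n)) atTop
      (𝓝 (ENNReal.ofReal (L / (m + 1)))) := by
    simpa using ENNReal.tendsto_ofReal
      ((tendsto_const_div_atTop_nhds_zero_nat L).const_add (L / (m + 1)))
  calc sepEntropy T univ (2 * ε)
      ≤ limsup (fun n : ℕ => ENNReal.ofReal (L / (m + 1) + L / n)) atTop :=
        limsup_le_limsup <| (eventually_ge_atTop 1).mono fun n hn =>
          ofReal_le_ofReal (logSepCount_two_mul_div_le hT hε hn)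
    _ = _ := hlim.limsup_eq

lemma toReal_topEntropyOn_sub_le [Nonempty G] (hT : Continuous T) (hε : 0 < ε) {r : ℝ}
    (hr : 0 ≤ r) (hH : topEntropyOn T univ ≤ sepEntropy T univ (2 * ε) + ENNReal.ofReal r)
    (m : ℕ) :
    (topEntropyOn T univ).toReal - r ≤ logSepCount T univ m ε / (m + 1) := by
  have hL : 0 ≤ logSepCount T univ m ε / (m + 1) :=
    div_nonneg logSepCount_nonneg (by positivity)
  have h := hH.trans (add_le_add_left (sepEntropy_two_mul_le hT hε m) _)
  rw [← ofReal_add hL hr] at h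
  linarith [toReal_le_of_le_ofReal (add_nonneg hL hr) h]

end Entropy

section StableSet

variable {G : Type} [MetricSpace G]

/-- The set `A_t(y)`. -/
def stableSet (T : G → G) (t : ℝ) (y : G) : Set G :=
  {z | ∀ k : ℕ, dist (T^[k] z) (T^[k] y) ≤ t}

variable {T : G → G} {t t' : ℝ} {y : G}

lemma mem_stableSet_self (ht : 0 ≤ t) : y ∈ stableSet T t y := fun k => by simpa using ht

lemma stableSet_mono (h : t ≤ t') : stableSet T t y ⊆ stableSet T t' y :=
  fun _ hz k => (hz k).trans h

lemma bowenDist_le_of_mem_stableSet {z : G} (hz : z ∈ stableSet T t y) (n : ℕ) :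
    bowenDist T n z y ≤ t :=
  (bowenDist_le_iff T).2 fun k _ => hz k

end StableSet

section Group

variable {G : Type} [MetricSpace G] [AddCommMonoid G] {F : Type*} [FunLike F G G]
  [AddHomClass F G G] (hinv : ∀ x y z : G, dist (x + z) (y + z) = dist x y) (T : F)
  {n : ℕ} {δ ε : ℝ}
include hinv

lemma bowenDist_add_right (n : ℕ) (x y z : G) :
    bowenDist T n (x + z) (y + z) = bowenDist T n x y := by
  simp only [bowenDist, iterate_map_add, hinv]

lemma bowenDist_add_left (n : ℕ) (x y z : G) :
    bowenDist T n (z + x) (z + y) = bowenDist T n x y := by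
  simpa only [add_comm z] using bowenDist_add_right hinv T n x y z

/-- Translates of `A_δ(y)` by the points of a `3δ`-separated set are `δ`-apart, since
`A_δ(y)` has Bowen diameter at most `2δ`. -/
lemma le_bowenDist_add_add (hεδ : ε ≤ δ) {y e e' f f' : G} (he : e ∈ stableSet T δ y)
    (he' : e' ∈ stableSet T δ y) (hf : f ≠ f' → 3 * δ ≤ bowenDist T n f f')
    (hee : e ≠ e' → ε ≤ bowenDist T n e e') (hne : f ≠ f' ∨ e ≠ e') :
    ε ≤ bowenDist T n (f + e) (f' + e') := by
  by_cases hff : f = f'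
  · subst hff
    rw [bowenDist_add_left hinv]
    exact hee (hne.resolve_left (not_not.2 rfl))
  have htri : bowenDist T n f f' ≤ bowenDist T n (f + e) (f' + e') + bowenDist T n e' e := by
    rw [← bowenDist_add_right hinv T n f f' e, ← bowenDist_add_left hinv T n e' e f']
    simp only [bowenDist_eq_dist]
    exact dist_triangle _ _ _
  have hdiam : bowenDist T n e' e ≤ 2 * δ := by
    have h := bowenDist_le_of_mem_stableSet he n
    have h' := bowenDist_le_of_mem_stableSet he' n
    rw [bowenDist_eq_dist] at h h' ⊢
    linarith [dist_triangle_right (bowenOrbit (⇑T) n e') (bowenOrbit (⇑T) n e)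
      (bowenOrbit (⇑T) n y)]
  linarith [hf hff]

lemma card_mul_card_le_sepCount (hε : 0 < ε) (hεδ : ε ≤ δ) {y : G} {E D : Finset G}
    (hE : IsBowenSeparated T (stableSet T δ y) n ε E) (hD : IsBowenSeparated T univ n (3 * δ) D) :
    (E.card * D.card : ℝ≥0∞) ≤ sepCount T univ n ε := by
  classical
  have hsep : ∀ p ∈ D ×ˢ E, ∀ q ∈ D ×ˢ E, p ≠ q →
      ε ≤ bowenDist T n (p.1 + p.2) (q.1 + q.2) := by
    rintro ⟨f, e⟩ hp ⟨f', e'⟩ hq hpq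
    rw [Finset.mem_product] at hp hq
    exact le_bowenDist_add_add hinv T hεδ (hE.1 hp.2) (hE.1 hq.2) (hD.2 f hp.1 f' hq.1)
      (hE.2 e hp.2 e' hq.2) (by rwa [Ne, Prod.mk.injEq, not_and_or] at hpq)
  have hinj : InjOn (fun p : G × G => p.1 + p.2) ↑(D ×ˢ E) := fun p hp q hq hpq => by
    by_contra hne
    refine (hsep p hp q hq hne).not_gt ?_
    simp only at hpq
    rwa [hpq, bowenDist_eq_dist, dist_self]
  have hP : IsBowenSeparated T univ n ε ((D ×ˢ E).image fun p => p.1 + p.2) := by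
    refine ⟨subset_univ _, ?_⟩
    simp only [Finset.mem_image]
    rintro _ ⟨p, hp, rfl⟩ _ ⟨q, hq, rfl⟩ hne
    exact hsep p hp q hq fun h => hne (h ▸ rfl)
  have := card_le_sepCount hP
  rw [Finset.card_image_of_injOn hinj, Finset.card_product] at this
  simpa [mul_comm] using this

lemma sepCount_stableSet_mul_le (hε : 0 < ε) (hεδ : ε ≤ δ) (y : G) :
    sepCount T (stableSet T δ y) n ε * sepCount T univ n (3 * δ) ≤ sepCount T univ n ε := by
  calc _ = ⨆ (D : Finset G) (_ : IsBowenSeparated T univ n (3 * δ) D)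
        (E : Finset G) (_ : IsBowenSeparated T (stableSet T δ y) n ε E),
          (E.card * D.card : ℝ≥0∞) := by
        simp only [sepCount, ENNReal.iSup_mul, ENNReal.mul_iSup]; rfl
    _ ≤ _ := iSup₂_le fun _ hD => iSup₂_le fun _ hE =>
        card_mul_card_le_sepCount hinv T hε hεδ hE hD

end Group

section StableSetEntropy

variable {G : Type} [MetricSpace G] [CompactSpace G] [AddCommMonoid G] {F : Type*}
  [FunLike F G G] [AddHomClass F G G] (hinv : ∀ x y z : G, dist (x + z) (y + z) = dist x y)
  (T : F) {n : ℕ} {δ ε c : ℝ}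
include hinv

lemma logSepCount_stableSet_add_le (hT : Continuous T) (hε : 0 < ε) (hεδ : ε ≤ δ) (y : G) :
    logSepCount T (stableSet T δ y) n ε + logSepCount T univ n (3 * δ)
      ≤ logSepCount T univ n ε := by
  have hδ : 0 < δ := hε.trans_le hεδ
  have hA : sepCount T (stableSet T δ y) n ε ≠ 0 :=
    (one_pos.trans_le (one_le_sepCount ⟨y, mem_stableSet_self hδ.le⟩)).ne'
  have hU : sepCount T univ n (3 * δ) ≠ 0 :=
    (one_pos.trans_le (one_le_sepCount ⟨y, mem_univ y⟩)).ne'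
  calc _ = Real.log (sepCount T (stableSet T δ y) n ε * sepCount T univ n (3 * δ)).toReal := by
        rw [toReal_mul, Real.log_mul (toReal_ne_zero.2 ⟨hA, sepCount_ne_top hT hε⟩)
          (toReal_ne_zero.2 ⟨hU, sepCount_ne_top hT (by positivity)⟩)]
        rfl
    _ ≤ logSepCount T univ n ε :=
        log_toReal_le_log_toReal (mul_ne_zero hA hU) (sepCount_stableSet_mul_le hinv T hε hεδ y)
          (sepCount_ne_top hT hε)

lemma sepEntropy_stableSet_le (hT : Continuous T) (hfin : topEntropyOn T univ ≠ ⊤)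
    (hc : 0 < c) (hH : topEntropyOn T univ ≤ sepEntropy T univ (6 * δ) + ENNReal.ofReal (c / 2))
    (hε : 0 < ε) (hεδ : ε ≤ δ) (y : G) :
    sepEntropy T (stableSet T δ y) ε ≤ ENNReal.ofReal c := by
  have hδ : 0 < δ := hε.trans_le hεδ
  have : Nonempty G := ⟨y⟩
  set H := (topEntropyOn T univ).toReal
  have hlow := toReal_topEntropyOn_sub_le hT (by positivity : 0 < 3 * δ) (half_pos hc).le
    (by rwa [← mul_assoc, show (2 : ℝ) * 3 = 6 by norm_num])
  have hup : ∀ᶠ n : ℕ in atTop, logSepCount T univ n ε / n < H + c / 2 := by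
    refine eventually_logSepCount_div_lt ?_
    calc sepEntropy T univ ε ≤ topEntropyOn T univ := le_iSup₂_of_le ε hε le_rfl
      _ = ENNReal.ofReal H := (ofReal_toReal hfin).symm
      _ < ENNReal.ofReal (H + c / 2) :=
        (ofReal_lt_ofReal_iff_of_nonneg toReal_nonneg).2 (by linarith)
  refine sepEntropy_le_ofReal ?_
  filter_upwards [hup, eventually_gt_atTop 0] with n hn hn0
  have hn' : (0 : ℝ) < n := by exact_mod_cast hn0
  have hsum : logSepCount T (stableSet T δ y) n ε / n + logSepCount T univ n (3 * δ) / n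
      ≤ logSepCount T univ n ε / n := by
    rw [← add_div]
    gcongr
    exact logSepCount_stableSet_add_le hinv T hT hε hεδ y
  have hshift : logSepCount T univ n (3 * δ) / (n + 1) ≤ logSepCount T univ n (3 * δ) / n :=
    div_le_div_of_nonneg_left logSepCount_nonneg hn' (by linarith)
  linarith [hlow n]

lemma topEntropyOn_stableSet_le (hT : Continuous T) (hfin : topEntropyOn T univ ≠ ⊤)
    (hc : 0 < c) (hH : topEntropyOn T univ ≤ sepEntropy T univ (6 * δ) + ENNReal.ofReal (c / 2))
    (hδ : 0 < δ) (y : G) :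
    topEntropyOn T (stableSet T δ y) ≤ ENNReal.ofReal c := by
  refine iSup₂_le fun ε hε => ?_
  rcases le_total ε δ with hεδ | hδε
  · exact sepEntropy_stableSet_le hinv T hT hfin hc hH hε hεδ y
  · exact (sepEntropy_mono hT hδ subset_rfl hδε).trans
      (sepEntropy_stableSet_le hinv T hT hfin hc hH hδ le_rfl y)

lemma exists_pos_forall_topEntropyOn_stableSet_le (hT : Continuous T)
    (hfin : topEntropyOn T univ ≠ ⊤) (hc : 0 < c) :
    ∃ δ > 0, ∀ y : G, topEntropyOn T (stableSet T δ y) ≤ ENNReal.ofReal c := by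
  obtain ⟨ε, hε, hH⟩ :=
    exists_topEntropyOn_le_sepEntropy_add hfin (ofReal_pos.2 (half_pos hc)).ne'
  refine ⟨ε / 6, by positivity, topEntropyOn_stableSet_le hinv T hT hfin hc ?_ (by positivity)⟩
  rwa [mul_div_cancel₀ ε (by norm_num : (6 : ℝ) ≠ 0)]

end StableSetEntropy

theorem stmt8_general {G : Type} [MetricSpace G] [CompactSpace G] [AddCommGroup G]
    (hinv : ∀ x y z : G, dist (x + z) (y + z) = dist x y)
    (T : G ≃+ G) (hT : Continuous T)
    (hfin : topEntropyOn (⇑T) Set.univ ≠ ⊤) :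
    Filter.Tendsto
      (fun t : ℝ =>
        ⨆ y : G, topEntropyOn (⇑T) {z : G | ∀ k : ℕ, dist ((⇑T)^[k] z) ((⇑T)^[k] y) ≤ t})
      (nhdsWithin 0 (Set.Ioi 0)) (nhds 0) := by
  rw [ENNReal.tendsto_nhds_zero]
  intro η hη
  obtain ⟨c, -, hc, hcη⟩ := ENNReal.lt_iff_exists_real_btwn.1 hη
  obtain ⟨δ, hδ, hbound⟩ :=
    exists_pos_forall_topEntropyOn_stableSet_le hinv T hT hfin (ofReal_pos.1 hc)
  filter_upwards [Ioc_mem_nhdsGT hδ] with t ht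
  exact iSup_le fun y =>
    (topEntropyOn_mono hT (stableSet_mono ht.2)).trans ((hbound y).trans hcη.le)

/-- Let `G` be a compact metrizable abelian group with a
translation-invariant compatible metric, and `T : G → G` a continuous group automorphism
with finite topological entropy.  Then `T` is asymptotically `h`-expansive:
`sup_{y ∈ G} h_top(T, A_t(y)) → 0` as `t → 0⁺`, where
`A_t(y) = {z : ρ(T^k z, T^k y) ≤ t for all k ≥ 0}`. -/
theorem stmt8 {G : Type} [MetricSpace G] [CompactSpace G] [AddCommGroup G]
    [IsTopologicalAddGroup G]
    (hinv : ∀ x y z : G, dist (x + z) (y + z) = dist x y)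
    (T : G ≃+ G) (hT : Continuous T)
    (hfin : topEntropyOn (⇑T) Set.univ ≠ ⊤) :
    Filter.Tendsto
      (fun t : ℝ =>
        ⨆ y : G, topEntropyOn (⇑T) {z : G | ∀ k : ℕ, dist ((⇑T)^[k] z) ((⇑T)^[k] y) ≤ t})
      (nhdsWithin 0 (Set.Ioi 0)) (nhds 0) :=
  stmt8_general hinv T hT hfin
end

section
/- Let X and Y be compact metrizable abelian groups, let λ_X be the normalized Haar measure on X, and let f : X → Y be a Borel measurable map. Let C(f) be the set of all h ∈ X such that the map x ↦ f(x + h) − f(x) is λ_X-almost everywhere equal to a constant. Then: (1) C(f) is a closed subgroup of X; and (2) f is λ_X-almost everywhere equal to an affine map if and only if C(f) = X. -/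
/-!
Everything rests on continuity of translation in measure: `f (· + k) - f → 0` in `λ_X`-measure
as `k → 0`. For a simple function this is the continuity of `k ↦ λ_X (A \ (A - k))`, which
inner regularity of Haar measure reduces to compact `A`; a general `f` is approximated in
measure by simple functions.

It makes the set of pairs `(h, c)` with `f (· + h) - f = c` a.e. closed in `X × Y`, so `C(f)`,
its projection, is closed since `Y` is compact. When `C(f) = X` the constants form a
homomorphism `ψ`, continuous at `0` by the same estimate, and Fubini gives a point `x₀` with
`f (x₀ + h) - f x₀ = ψ h` for a.e. `h`, so that `f = ψ + (f x₀ - ψ x₀)` a.e.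
-/

open MeasureTheory Filter Topology Set
open scoped ENNReal Pointwise Uniformity

theorem Filter.Tendsto.eventually_eq_of_countableInterFilter {α β : Type*} [TopologicalSpace β]
    [FirstCountableTopology β] [T1Space β] {l : Filter α} [CountableInterFilter l]
    {g : α → β} {c : β} (h : Tendsto g l (𝓝 c)) : ∀ᶠ x in l, g x = c := by
  obtain ⟨B, hB⟩ := (𝓝 c).exists_antitone_basis
  filter_upwards [eventually_countable_forall.2 fun n => h (hB.mem n)] with x hx
  have hker : g x ∈ (𝓝 c).ker :=
    mem_ker.2 fun s hs => let ⟨n, hn⟩ := hB.mem_iff.1 hs; hn (hx n)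
  rwa [ker_nhds] at hker

theorem mem_of_ae_eq_const_of_measure_lt_univ {α β : Type*} [MeasurableSpace α] {μ : Measure α}
    {g : α → β} {c : β} {V : Set β} (hg : ∀ᵐ x ∂μ, g x = c)
    (hV : μ {x | g x ∉ V} < μ univ) : c ∈ V := by
  by_contra hc
  have hnotMem : ∀ᵐ x ∂μ, g x ∉ V := hg.mono fun x hx => hx ▸ hc
  have hnull : μ {x | g x ∉ V}ᶜ = 0 := ae_iff.1 hnotMem
  exact (measure_univ_le_add_compl {x | g x ∉ V}).not_gt (by rwa [hnull, add_zero])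

theorem ae_comp_add_right {X : Type*} [AddGroup X] [MeasurableSpace X] [MeasurableAdd X]
    {μ : Measure X} [μ.IsAddRightInvariant] {p : X → Prop} (h : ∀ᵐ x ∂μ, p x) (k : X) :
    ∀ᵐ x ∂μ, p (x + k) :=
  (measurePreserving_add_right μ k).quasiMeasurePreserving.ae h

section Cocycle

variable {X Y : Type*} [AddCommGroup X] [MeasurableSpace X] [MeasurableAdd X] {μ : Measure X}
  [μ.IsAddRightInvariant] [AddCommGroup Y] {f : X → Y}

theorem ae_comp_add_add_sub_eq {a b : X} {c c' : Y} (ha : ∀ᵐ x ∂μ, f (x + a) - f x = c)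
    (hb : ∀ᵐ x ∂μ, f (x + b) - f x = c') : ∀ᵐ x ∂μ, f (x + (a + b)) - f x = c + c' := by
  filter_upwards [ae_comp_add_right ha b, hb] with x h1 h2
  rw [← h1, ← h2, add_comm a b, ← add_assoc]
  abel

variable (μ f) in
def aeConstDiffSubgroup : AddSubgroup X where
  carrier := {h | ∃ c, ∀ᵐ x ∂μ, f (x + h) - f x = c}
  zero_mem' := ⟨0, by simp⟩
  add_mem' := fun ⟨c, hc⟩ ⟨c', hc'⟩ => ⟨c + c', ae_comp_add_add_sub_eq hc hc'⟩
  neg_mem' := fun {a} ⟨c, hc⟩ => ⟨-c, by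
    filter_upwards [ae_comp_add_right hc (-a)] with x hx
    rw [← hx, neg_add_cancel_right]
    abel⟩

theorem ae_comp_add_sub_eq_of_ae_eq_add_const {ψ : X →+ Y} {y : Y}
    (hf : ∀ᵐ x ∂μ, f x = ψ x + y) (h : X) : ∀ᵐ x ∂μ, f (x + h) - f x = ψ h := by
  filter_upwards [hf, ae_comp_add_right hf h] with x h1 h2
  rw [h1, h2, map_add]
  abel

theorem exists_addMonoidHom_ae_comp_add_sub_eq [NeZero μ]
    (hf : ∀ h, ∃ c, ∀ᵐ x ∂μ, f (x + h) - f x = c) :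
    ∃ ψ : X →+ Y, ∀ h, ∀ᵐ x ∂μ, f (x + h) - f x = ψ h := by
  choose φ hφ using hf
  have hadd (a b : X) : φ (a + b) = φ a + φ b := by
    obtain ⟨x, h1, h2⟩ := (hφ (a + b) |>.and (ae_comp_add_add_sub_eq (hφ a) (hφ b))).exists
    exact h1.symm.trans h2
  exact ⟨AddMonoidHom.mk' φ hadd, hφ⟩

theorem exists_ae_eq_add_const_of_ae_comp_add_sub_eq [MeasurableAdd₂ X] [SFinite μ] [NeZero μ]
    [MeasurableSpace Y] [MeasurableSingletonClass Y] [MeasurableSub₂ Y] (hf : Measurable f)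
    {ψ : X →+ Y} (hψ : Measurable ψ) (h : ∀ k, ∀ᵐ x ∂μ, f (x + k) - f x = ψ k) :
    ∃ y, ∀ᵐ x ∂μ, f x = ψ x + y := by
  have hmeas : MeasurableSet {p : X × X | f (p.1 + p.2) - f p.1 = ψ p.2} :=
    measurableSet_eq_fun (by fun_prop) (by fun_prop)
  obtain ⟨x₀, hx₀⟩ := ((Measure.ae_ae_comm (μ := μ) (ν := μ) hmeas).2 (ae_of_all _ h)).exists
  refine ⟨f x₀ - ψ x₀, ?_⟩
  filter_upwards [ae_comp_add_right hx₀ (-x₀)] with x hx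
  rw [add_neg_cancel_comm_assoc, map_add, map_neg, sub_eq_iff_eq_add] at hx
  rw [hx]
  abel

end Cocycle

section Translation

variable {X : Type*} [TopologicalSpace X] [AddCommGroup X] [IsTopologicalAddGroup X]
  [LocallyCompactSpace X] [T2Space X] [MeasurableSpace X] [BorelSpace X]
  {μ : Measure X} [μ.IsAddHaarMeasure] [μ.InnerRegularCompactLTTop]

theorem tendsto_measure_sdiff_preimage_add_right {A : Set X} (hA : MeasurableSet A)
    (hμA : μ A ≠ ∞) : Tendsto (fun k => μ (A \ (· + k) ⁻¹' A)) (𝓝 0) (𝓝 0) := by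
  refine ENNReal.tendsto_nhds_zero.2 fun ε hε => ?_
  have hε2 : ε / 2 ≠ 0 := (ENNReal.half_pos hε.ne').ne'
  obtain ⟨K, hKA, hK, hAK⟩ := hA.exists_isCompact_sdiff_lt hμA hε2
  filter_upwards [eventually_nhds_zero_measure_vadd_sdiff_lt (μ := μ) hK hK.isClosed hε2]
    with k hk
  have hsub : A \ (· + k) ⁻¹' A ⊆ (A \ K) ∪ (· + k) ⁻¹' ((k +ᵥ K) \ K) := by
    rintro x ⟨hxA, hxk⟩
    by_cases hxK : x ∈ K
    · exact Or.inr ⟨⟨x, hxK, add_comm k x⟩, fun h => hxk (hKA h)⟩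
    · exact Or.inl ⟨hxA, hxK⟩
  calc μ (A \ (· + k) ⁻¹' A) ≤ μ (A \ K) + μ ((· + k) ⁻¹' ((k +ᵥ K) \ K)) :=
        (measure_mono hsub).trans (measure_union_le _ _)
    _ ≤ ε / 2 + ε / 2 := by
        rw [measure_preimage_add_right]
        exact add_le_add hAK.le hk.le
    _ = ε := ENNReal.add_halves ε

theorem tendsto_measure_simpleFunc_comp_add_ne [IsFiniteMeasure μ] {Y : Type*}
    (s : SimpleFunc X Y) : Tendsto (fun k => μ {x | s (x + k) ≠ s x}) (𝓝 0) (𝓝 0) := by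
  have hsum : Tendsto (fun k => ∑ c ∈ s.range, μ (s ⁻¹' {c} \ (· + k) ⁻¹' (s ⁻¹' {c})))
      (𝓝 0) (𝓝 0) := by
    simpa using tendsto_finsetSum s.range fun c _ =>
      tendsto_measure_sdiff_preimage_add_right (s.measurableSet_fiber c) (measure_ne_top μ _)
  refine tendsto_of_tendsto_of_tendsto_of_le_of_le tendsto_const_nhds hsum (fun _ => zero_le)
    fun k => (measure_mono fun x hx => ?_).trans (measure_biUnion_finset_le _ _)
  exact mem_biUnion (s.mem_range_self x) ⟨rfl, hx⟩

end Translation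

theorem exists_simpleFunc_measure_sub_notMem_lt {X Y : Type*} [MeasurableSpace X]
    {μ : Measure X} [IsFiniteMeasure μ] [TopologicalSpace Y] [AddCommGroup Y]
    [IsTopologicalAddGroup Y] [CompactSpace Y] [TopologicalSpace.MetrizableSpace Y]
    [MeasurableSpace Y] [BorelSpace Y] {f : X → Y} (hf : Measurable f) {W : Set Y} (hW : W ∈ 𝓝 0)
    {ε : ℝ≥0∞} (hε : ε ≠ 0) : ∃ s : SimpleFunc X Y, μ {x | f x - s x ∉ W} < ε := by
  let := TopologicalSpace.metrizableSpaceMetric Y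
  have hWunif : {p : Y × Y | p.2 - p.1 ∈ W} ∈ 𝓤 Y := by
    rw [uniformity_eq_comap_nhds_zero Y]
    exact preimage_mem_comap hW
  obtain ⟨δ, hδ, hδW⟩ := mem_uniformity_edist.1 hWunif
  set s := SimpleFunc.approxOn f hf univ 0 (mem_univ 0)
  have hs : TendstoInMeasure μ (fun n => ⇑(s n)) atTop f :=
    tendstoInMeasure_of_tendsto_ae (fun n => (s n).aestronglyMeasurable) <| ae_of_all _
      fun x => SimpleFunc.tendsto_approxOn hf _ (subset_closure (mem_univ _))
  obtain ⟨n, hn⟩ := ((hs δ hδ).eventually (gt_mem_nhds hε.bot_lt)).exists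
  refine ⟨s n, (measure_mono fun x (hx : f x - s n x ∉ W) => ?_).trans_lt hn⟩
  exact not_lt.1 fun h => hx (hδW h)

section Differences

variable {X Y : Type*} [TopologicalSpace X] [AddCommGroup X] [IsTopologicalAddGroup X]
  [LocallyCompactSpace X] [T2Space X] [MeasurableSpace X] [BorelSpace X]
  {μ : Measure X} [μ.IsAddHaarMeasure] [μ.InnerRegularCompactLTTop] [IsFiniteMeasure μ]
  [TopologicalSpace Y] [AddCommGroup Y] [IsTopologicalAddGroup Y] [CompactSpace Y]
  [TopologicalSpace.MetrizableSpace Y] [MeasurableSpace Y] [BorelSpace Y]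
  {f : X → Y}

theorem tendsto_measure_comp_add_sub_notMem (hf : Measurable f) {V : Set Y} (hV : V ∈ 𝓝 0) :
    Tendsto (fun k => μ {x | f (x + k) - f x ∉ V}) (𝓝 0) (𝓝 0) := by
  refine ENNReal.tendsto_nhds_zero.2 fun ε hε => ?_
  have hε3 : ε / 3 ≠ 0 := by simpa using hε.ne'
  obtain ⟨W, hW, hWV⟩ := exists_nhds_half_neg hV
  obtain ⟨s, hs⟩ := exists_simpleFunc_measure_sub_notMem_lt (μ := μ) hf hW hε3
  set E := {x | f x - s x ∉ W}
  filter_upwards [ENNReal.tendsto_nhds_zero.1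
    (tendsto_measure_simpleFunc_comp_add_ne (μ := μ) s) _ (pos_iff_ne_zero.2 hε3)] with k hk
  have hsub : {x | f (x + k) - f x ∉ V} ⊆ (· + k) ⁻¹' E ∪ E ∪ {x | s (x + k) ≠ s x} := by
    intro x hx
    by_contra h
    simp only [mem_union, mem_preimage, mem_ofPred_eq, not_or, not_not, E] at h
    obtain ⟨⟨h1, h2⟩, h3⟩ := h
    apply hx
    simpa only [h3, sub_sub_sub_cancel_right] using hWV _ h1 _ h2
  calc μ {x | f (x + k) - f x ∉ V} ≤ μ ((· + k) ⁻¹' E) + μ E + μ {x | s (x + k) ≠ s x} :=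
        (measure_mono hsub).trans <|
          (measure_union_le _ _).trans (add_le_add_left (measure_union_le _ _) _)
    _ ≤ ε / 3 + ε / 3 + ε / 3 := by
        rw [measure_preimage_add_right]
        gcongr
    _ = ε := ENNReal.add_thirds ε

theorem tendsto_nhds_zero_of_ae_comp_add_sub_eq (hf : Measurable f) {φ : X → Y}
    (hφ : ∀ k, ∀ᵐ x ∂μ, f (x + k) - f x = φ k) : Tendsto φ (𝓝 0) (𝓝 0) := fun _ hV =>
  ((tendsto_measure_comp_add_sub_notMem hf hV).eventually_lt_const
    (Measure.measure_univ_pos.2 (NeZero.ne μ))).mono fun k hk =>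
      mem_of_ae_eq_const_of_measure_lt_univ (hφ k) hk

variable (μ f) in
def aeConstDiffGraph : Set (X × Y) := {p | ∀ᵐ x ∂μ, f (x + p.1) - f x = p.2}

theorem isClosed_aeConstDiffGraph (hf : Measurable f) : IsClosed (aeConstDiffGraph μ f) := by
  refine closure_subset_iff_isClosed.1 fun ⟨h, c⟩ hp => ?_
  have := mem_closure_iff_nhdsWithin_neBot.1 hp
  change ∀ᵐ x ∂μ, f (x + h) - f x = c
  refine Tendsto.eventually_eq_of_countableInterFilter fun V hV => mem_map.2 (mem_ae_iff.2 ?_)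
  have hadd : Tendsto (fun q : Y × Y => q.1 + q.2) (𝓝 0 ×ˢ 𝓝 c) (𝓝 c) := by
    simpa [nhds_prod_eq] using continuous_add.tendsto ((0 : Y), c)
  obtain ⟨W, hW, V', hV', hWV⟩ := mem_prod_iff.1 (hadd hV)
  have hshift : Tendsto (fun p : X × Y => h - p.1) (𝓝[aeConstDiffGraph μ f] (h, c)) (𝓝 0) :=
    ((continuous_const.sub continuous_fst).tendsto' (h, c) 0 (sub_self h)).mono_left
      nhdsWithin_le_nhds
  have hnear : ∀ᶠ p in 𝓝[aeConstDiffGraph μ f] (h, c), p ∈ aeConstDiffGraph μ f ∧ p.2 ∈ V' :=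
    eventually_mem_nhdsWithin.and
      ((continuous_snd.tendsto (h, c)).eventually hV' |>.filter_mono nhdsWithin_le_nhds)
  refine le_antisymm (ge_of_tendsto ((tendsto_measure_comp_add_sub_notMem (μ := μ) hf hW).comp
    hshift) (hnear.mono fun ⟨h', c'⟩ ⟨hmem, hc'⟩ => ?_)) zero_le
  have hh' : ∀ᵐ x ∂μ, f (x + h') - f x = c' := hmem
  -- a.e. `f (x + h) - f x = (f (x + h) - f (x + h')) + c'`, with the first summand small
  calc μ ((fun x => f (x + h) - f x) ⁻¹' V)ᶜ
      ≤ μ ((· + h') ⁻¹' {x | f (x + (h - h')) - f x ∉ W}) := by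
        refine measure_mono_ae (hh'.mono fun x hx hxV hxW => hxV ?_)
        have hxW' : f (x + h) - f (x + h') ∈ W := by simpa [add_add_sub_cancel] using hxW
        simpa [← hx] using hWV (mk_mem_prod hxW' hc')
    _ = μ {x | f (x + (h - h')) - f x ∉ W} := measure_preimage_add_right μ h' _

end Differences

theorem stmt11_general {X Y : Type} [TopologicalSpace X] [AddCommGroup X] [IsTopologicalAddGroup X]
    [CompactSpace X] [TopologicalSpace.MetrizableSpace X]
    [MeasurableSpace X] [BorelSpace X]
    [TopologicalSpace Y] [AddCommGroup Y] [IsTopologicalAddGroup Y]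
    [CompactSpace Y] [TopologicalSpace.MetrizableSpace Y]
    [MeasurableSpace Y] [BorelSpace Y]
    (lamX : Measure X) [lamX.IsAddHaarMeasure]
    (f : X → Y) (hf : Measurable f) :
    (IsClosed {h : X | ∃ c : Y, ∀ᵐ x ∂lamX, f (x + h) - f x = c} ∧
      ∃ H : AddSubgroup X,
        (H : Set X) = {h : X | ∃ c : Y, ∀ᵐ x ∂lamX, f (x + h) - f x = c}) ∧
    ((∃ (ψ : X →+ Y) (y : Y), Continuous ψ ∧ ∀ᵐ x ∂lamX, f x = ψ x + y) ↔
      {h : X | ∃ c : Y, ∀ᵐ x ∂lamX, f (x + h) - f x = c} = Set.univ) := by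
  have hproj : {h : X | ∃ c : Y, ∀ᵐ x ∂lamX, f (x + h) - f x = c} =
      Prod.fst '' aeConstDiffGraph lamX f := by
    ext h
    simp [aeConstDiffGraph]
  refine ⟨⟨hproj ▸ isClosedMap_fst_of_compactSpace _ (isClosed_aeConstDiffGraph hf),
    aeConstDiffSubgroup lamX f, rfl⟩, fun ⟨ψ, y, _, hψ⟩ => eq_univ_of_forall fun h =>
      ⟨ψ h, ae_comp_add_sub_eq_of_ae_eq_add_const hψ h⟩, fun hall => ?_⟩
  obtain ⟨ψ, hψ⟩ := exists_addMonoidHom_ae_comp_add_sub_eq (μ := lamX) fun h =>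
    hall.ge (mem_univ h)
  have hψc : Continuous ψ := continuous_of_continuousAt_zero ψ <| by
    simpa [ContinuousAt] using tendsto_nhds_zero_of_ae_comp_add_sub_eq hf hψ
  obtain ⟨y, hy⟩ := exists_ae_eq_add_const_of_ae_comp_add_sub_eq hf hψc.measurable hψ
  exact ⟨ψ, y, hψc, hy⟩

/-- Let `X`, `Y` be (infinite) compact metrizable abelian groups,
`λ_X` the normalized Haar measure on `X`, and `f : X → Y` Borel measurable.  Let
`C(f)` be the set of `h ∈ X` such that `x ↦ f(x+h) − f(x)` is a.e. constant.  Then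
`C(f)` is a closed subgroup of `X`, and `f` is a.e. equal to an affine map (a continuous
group homomorphism plus a constant) if and only if `C(f) = X`. -/
theorem stmt11 {X Y : Type} [TopologicalSpace X] [AddCommGroup X] [IsTopologicalAddGroup X]
    [CompactSpace X] [TopologicalSpace.MetrizableSpace X] [Infinite X]
    [MeasurableSpace X] [BorelSpace X]
    [TopologicalSpace Y] [AddCommGroup Y] [IsTopologicalAddGroup Y]
    [CompactSpace Y] [TopologicalSpace.MetrizableSpace Y] [Infinite Y]
    [MeasurableSpace Y] [BorelSpace Y]
    (lamX : Measure X) [lamX.IsAddHaarMeasure] [IsProbabilityMeasure lamX]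
    (f : X → Y) (hf : Measurable f) :
    (IsClosed {h : X | ∃ c : Y, ∀ᵐ x ∂lamX, f (x + h) - f x = c} ∧
      ∃ H : AddSubgroup X,
        (H : Set X) = {h : X | ∃ c : Y, ∀ᵐ x ∂lamX, f (x + h) - f x = c}) ∧
    ((∃ (ψ : X →+ Y) (y : Y), Continuous ψ ∧ ∀ᵐ x ∂lamX, f x = ψ x + y) ↔
      {h : X | ∃ c : Y, ∀ᵐ x ∂lamX, f (x + h) - f x = c} = Set.univ) :=
  stmt11_general lamX f hf
end

section
/- Let X and Y be compact metrizable abelian groups with normalized Haar measures λ_X and λ_Y, and let f : X → Y be a Borel measurable map. Define i : X → X × Y by i(x) = (x, f(x)) and let μ = i_*(λ_X) be the pushforward measure on X × Y. Then f is λ_X-almost everywhere equal to an affine map if and only if μ is an affine measure, i.e., μ is a translate of the normalized Haar measure of some closed subgroup of X × Y. -/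
/-!
If `f = ψ + y` a.e., the graph measure is the translate by `(0, y)` of the image of `λ_X` under
the continuous homomorphism `x ↦ (x, ψ x)`, which is the Haar measure of the closed subgroup
`graph ψ`.

Conversely, let the graph measure `μ` be the translate by `g` of an `H`-invariant measure carried
by `H`. Then `μ` is `H`-invariant and is carried by the graph of `f`, so `H` contains no
nonzero vertical element `(0, k)`. The coset `g + H` has full `μ`-measure, so its projection to
`X` is a closed set of full Haar measure, hence all of `X`. Thus `H` is the graph of a
homomorphism `ψ`, continuous because `H` is compact, and `f x = ψ (x - g.1) + g.2` a.e.
-/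

open MeasureTheory

/-- A Borel probability measure `μ` on a compact abelian group `G` is *affine* if it is
the translate, by some `g ∈ G`, of the normalized Haar measure of a closed subgroup
`H ⊆ G`, viewed as a measure on `G`.  The normalized Haar measure of `H` viewed as a
measure on `G` is encoded by its characteristic properties: it is the unique Borel
probability measure `ν` on `G` with `ν(H) = 1` that is invariant under translation by
every element of `H`. -/
def IsAffineMeasure {G : Type} [TopologicalSpace G] [AddCommGroup G]
    [MeasurableSpace G] (μ : Measure G) : Prop :=
  ∃ (H : AddSubgroup G) (ν : Measure G) (g : G),
    IsClosed (H : Set G) ∧ IsProbabilityMeasure ν ∧ ν (H : Set G) = 1 ∧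
      (∀ h ∈ H, Measure.map (fun x => x + h) ν = ν) ∧
      μ = Measure.map (fun x => x + g) ν

instance Prod.measurableAdd {M N : Type*} [Add M] [Add N] [MeasurableSpace M] [MeasurableSpace N]
    [MeasurableAdd M] [MeasurableAdd N] : MeasurableAdd (M × N) where
  measurable_const_add c := (measurable_fst.const_add c.1).prodMk (measurable_snd.const_add c.2)
  measurable_add_const c := (measurable_fst.add_const c.1).prodMk (measurable_snd.add_const c.2)

namespace MeasureTheory.Measure

theorem map_add_right_map_add_right_eq_self {G : Type*} [AddCommSemigroup G] [MeasurableSpace G]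
    [MeasurableAdd G] {ν : Measure G} {h : G} (hν : ν.map (· + h) = ν) (g : G) :
    (ν.map (· + g)).map (· + h) = ν.map (· + g) := by
  rw [map_map (measurable_add_const h) (measurable_add_const g)]
  conv_rhs => rw [← hν, map_map (measurable_add_const g) (measurable_add_const h)]
  congr 1
  funext x
  exact add_right_comm x g h

theorem map_map_add_right_eq_self_of_addMonoidHom {G H : Type*} [AddGroup G] [AddGroup H]
    [MeasurableSpace G] [MeasurableSpace H] [MeasurableAdd G] [MeasurableAdd H]
    (μ : Measure G) [μ.IsAddRightInvariant] {φ : G →+ H} (hφ : Measurable φ) (a : G) :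
    (μ.map φ).map (· + φ a) = μ.map φ := by
  have hcomm : (· + φ a) ∘ φ = φ ∘ (· + a) := by
    funext x
    simp
  rw [map_map (measurable_add_const _) hφ, hcomm, ← map_map hφ (measurable_add_const a),
    map_add_right_eq_self]

end MeasureTheory.Measure

section Graph

variable {X Y : Type*} [MeasurableSpace X] [MeasurableSpace Y] {f : X → Y}

theorem ae_map_graph_snd_eq [MeasurableEq Y] (μ : Measure X) (hf : Measurable f) :
    ∀ᵐ p ∂μ.map (fun x => (x, f x)), p.2 = f p.1 :=
  (ae_map_iff (measurable_id.prodMk hf).aemeasurable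
    (measurableSet_eq_fun measurable_snd (hf.comp measurable_fst))).2 (ae_of_all _ fun _ => rfl)

theorem eq_zero_of_map_graph_add_right_eq_self [AddZeroClass X] [AddGroup Y]
    [MeasurableAdd X] [MeasurableAdd Y] [MeasurableEq Y] (μ : Measure X) [NeZero μ]
    (hf : Measurable f) {k : Y}
    (hk : (μ.map (fun x => (x, f x))).map (· + ((0 : X), k)) = μ.map (fun x => (x, f x))) :
    k = 0 := by
  have hi : Measurable fun x => (x, f x) := measurable_id.prodMk hf
  have hshift := ae_of_ae_map hi.aemeasurable <|
    ae_of_ae_map (measurable_add_const _).aemeasurable (hk.symm ▸ ae_map_graph_snd_eq μ hf)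
  obtain ⟨x, hx⟩ := hshift.exists
  simpa using hx

end Graph

theorem AddSubgroup.exists_continuous_addMonoidHom_map_fst_eq_snd {X Y : Type*}
    [TopologicalSpace X] [TopologicalSpace Y] [AddGroup X] [AddGroup Y] [T2Space X]
    {H : AddSubgroup (X × Y)} (hH : IsCompact (H : Set (X × Y)))
    (hvert : ∀ k, ((0 : X), k) ∈ H → k = 0) (hsurj : ∀ x, ∃ y, (x, y) ∈ H) :
    ∃ ψ : X →+ Y, Continuous ψ ∧ ∀ p ∈ H, ψ p.1 = p.2 := by
  have : CompactSpace H := isCompact_iff_compactSpace.mp hH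
  let φ : H →+ X := (AddMonoidHom.fst X Y).comp H.subtype
  have hinj : Function.Injective φ := by
    rw [injective_iff_map_eq_zero]
    rintro ⟨⟨x, k⟩, hp⟩ (rfl : x = 0)
    obtain rfl := hvert k hp
    rfl
  have hsurj' : Function.Surjective φ := fun x =>
    let ⟨y, hy⟩ := hsurj x
    ⟨⟨(x, y), hy⟩, rfl⟩
  let e : H ≃+ X := AddEquiv.ofBijective φ ⟨hinj, hsurj'⟩
  have he : Continuous e := continuous_fst.comp continuous_subtype_val
  refine ⟨(AddMonoidHom.snd X Y).comp (H.subtype.comp e.symm.toAddMonoidHom),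
    continuous_snd.comp (continuous_subtype_val.comp
      (he.continuous_symm_of_equiv_compact_to_t2 (f := e.toEquiv))), fun p hp => ?_⟩
  have : e.symm p.1 = ⟨p, hp⟩ := e.symm_apply_eq.2 rfl
  simp [this]

theorem IsAffineMeasure.exists_ae_sub_mem {G : Type} [TopologicalSpace G] [AddCommGroup G]
    [IsTopologicalAddGroup G] [MeasurableSpace G] [OpensMeasurableSpace G] [MeasurableAdd G]
    {μ : Measure G} (hμ : IsAffineMeasure μ) :
    ∃ (H : AddSubgroup G) (g : G),
      IsClosed (H : Set G) ∧ (∀ h ∈ H, μ.map (· + h) = μ) ∧ ∀ᵐ p ∂μ, p - g ∈ H := by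
  obtain ⟨H, ν, g, hH, hν, hνH, hinv, rfl⟩ := hμ
  refine ⟨H, g, hH, fun h hh => Measure.map_add_right_map_add_right_eq_self (hinv h hh) g, ?_⟩
  have hHν : ∀ᵐ q ∂ν, q ∈ H :=
    (ae_mem_iff_measure_eq hH.measurableSet.nullMeasurableSet).2 (by rw [hνH, measure_univ])
  refine (ae_map_iff (measurable_add_const g).aemeasurable
    (hH.preimage (continuous_sub_right g)).measurableSet).2 ?_
  simpa using hHν

theorem isAffineMeasure_map_graph_add_const {X Y : Type} [TopologicalSpace X] [AddCommGroup X]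
    [MeasurableSpace X] [OpensMeasurableSpace X] [MeasurableAdd X]
    [TopologicalSpace Y] [AddCommGroup Y] [T2Space Y] [MeasurableSpace Y] [BorelSpace Y]
    [MeasurableAdd Y] (lamX : Measure X) [IsProbabilityMeasure lamX]
    [lamX.IsAddRightInvariant] {ψ : X →+ Y} (hψ : Continuous ψ) (y : Y) :
    IsAffineMeasure (lamX.map fun x => (x, ψ x + y)) := by
  let φ := (AddMonoidHom.id X).prod ψ
  have hφ : Measurable φ := measurable_id.prodMk hψ.measurable
  have : IsProbabilityMeasure (lamX.map φ) := Measure.isProbabilityMeasure_map hφ.aemeasurable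
  refine ⟨φ.range, lamX.map φ, ((0 : X), y), ?_, this, ?_, ?_, ?_⟩
  · rw [AddMonoidHom.coe_range]
    convert isClosed_eq (hψ.comp continuous_fst) continuous_snd
    ext ⟨x, y⟩
    simp [φ, eq_comm]
  · refine le_antisymm prob_le_one ?_
    calc (1 : ENNReal) = lamX (φ ⁻¹' φ.range) := by simp
      _ ≤ _ := Measure.le_map_apply hφ.aemeasurable _
  · rintro _ ⟨a, rfl⟩
    exact lamX.map_map_add_right_eq_self_of_addMonoidHom hφ a
  · rw [Measure.map_map (measurable_add_const _) hφ]
    congr 1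
    funext x
    simp [φ]

theorem exists_ae_eq_add_of_isAffineMeasure_map_graph {X Y : Type} [TopologicalSpace X]
    [AddCommGroup X] [IsTopologicalAddGroup X] [CompactSpace X] [T2Space X] [MeasurableSpace X]
    [BorelSpace X] [TopologicalSpace Y] [AddCommGroup Y] [IsTopologicalAddGroup Y]
    [CompactSpace Y] [MeasurableSpace Y] [BorelSpace Y] [MeasurableEq Y]
    [OpensMeasurableSpace (X × Y)] (lamX : Measure X) [lamX.IsOpenPosMeasure] [NeZero lamX]
    {f : X → Y} (hf : Measurable f) (hμ : IsAffineMeasure (lamX.map fun x => (x, f x))) :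
    ∃ (ψ : X →+ Y) (y : Y), Continuous ψ ∧ ∀ᵐ x ∂lamX, f x = ψ x + y := by
  obtain ⟨H, g, hH, hinv, hae⟩ := hμ.exists_ae_sub_mem
  have hgraph : ∀ᵐ x ∂lamX, (x, f x) - g ∈ H :=
    ae_of_ae_map (measurable_id.prodMk hf).aemeasurable hae
  have hvert : ∀ k, ((0 : X), k) ∈ H → k = 0 := fun k hk =>
    eq_zero_of_map_graph_add_right_eq_self lamX hf (hinv _ hk)
  have hclosed : IsClosed ((· - g.1) ⁻¹' (Prod.fst '' (H : Set (X × Y)))) :=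
    (hH.isCompact.image continuous_fst).isClosed.preimage (continuous_sub_right _)
  have hproj : (· - g.1) ⁻¹' (Prod.fst '' (H : Set (X × Y))) = Set.univ :=
    hclosed.ae_eq_univ_iff_eq.1
      (Filter.eventuallyEq_univ.2 (hgraph.mono fun x hx => ⟨_, hx, rfl⟩))
  have hsurj : ∀ x, ∃ y, (x, y) ∈ H := fun x => by
    obtain ⟨⟨a, b⟩, hp, hpx⟩ : x + g.1 ∈ _ := hproj ▸ Set.mem_univ _
    obtain rfl : a = x := by simpa using hpx
    exact ⟨b, hp⟩
  obtain ⟨ψ, hψ, hψH⟩ :=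
    AddSubgroup.exists_continuous_addMonoidHom_map_fst_eq_snd hH.isCompact hvert hsurj
  refine ⟨ψ, g.2 - ψ g.1, hψ, hgraph.mono fun x hx => ?_⟩
  have hx' : ψ x - ψ g.1 = f x - g.2 := by simpa using hψH _ hx
  calc f x = (f x - g.2) + g.2 := (sub_add_cancel _ _).symm
    _ = ψ x + (g.2 - ψ g.1) := by rw [← hx']; abel

theorem stmt13_general {X Y : Type} [TopologicalSpace X] [AddCommGroup X] [IsTopologicalAddGroup X]
    [CompactSpace X] [TopologicalSpace.MetrizableSpace X]
    [MeasurableSpace X] [BorelSpace X]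
    [TopologicalSpace Y] [AddCommGroup Y] [IsTopologicalAddGroup Y]
    [CompactSpace Y] [TopologicalSpace.MetrizableSpace Y]
    [SecondCountableTopology Y] [MeasurableSpace Y] [BorelSpace Y]
    (lamX : Measure X) [lamX.IsAddHaarMeasure] [IsProbabilityMeasure lamX]
    (f : X → Y) (hf : Measurable f) :
    (∃ (ψ : X →+ Y) (y : Y), Continuous ψ ∧ ∀ᵐ x ∂lamX, f x = ψ x + y) ↔
      IsAffineMeasure (Measure.map (fun x => (x, f x)) lamX) := by
  refine ⟨fun ⟨ψ, y, hψ, hae⟩ => ?_, exists_ae_eq_add_of_isAffineMeasure_map_graph lamX hf⟩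
  rw [Measure.map_congr (hae.mono fun x hx => by rw [hx])]
  exact isAffineMeasure_map_graph_add_const lamX hψ y

/-- Let `X`, `Y` be (infinite) compact metrizable abelian groups with
normalized Haar measures, `f : X → Y` Borel measurable, and let `μ = i_*(λ_X)` be the
pushforward of `λ_X` under `i : x ↦ (x, f x)`.  Then `f` is `λ_X`-a.e. equal to an affine
map if and only if `μ` is an affine measure on `X × Y`. -/
theorem stmt13 {X Y : Type} [TopologicalSpace X] [AddCommGroup X] [IsTopologicalAddGroup X]
    [CompactSpace X] [TopologicalSpace.MetrizableSpace X]
    [SecondCountableTopology X] [Infinite X] [MeasurableSpace X] [BorelSpace X]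
    [TopologicalSpace Y] [AddCommGroup Y] [IsTopologicalAddGroup Y]
    [CompactSpace Y] [TopologicalSpace.MetrizableSpace Y]
    [SecondCountableTopology Y] [Infinite Y] [MeasurableSpace Y] [BorelSpace Y]
    (lamX : Measure X) [lamX.IsAddHaarMeasure] [IsProbabilityMeasure lamX]
    (f : X → Y) (hf : Measurable f) :
    (∃ (ψ : X →+ Y) (y : Y), Continuous ψ ∧ ∀ᵐ x ∂lamX, f x = ψ x + y) ↔
      IsAffineMeasure (Measure.map (fun x => (x, f x)) lamX) :=
  stmt13_general lamX f hf
end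

section
/- Let X and Y be compact metrizable abelian groups, λ_X the normalized Haar measure on X, and f : X → Y a Borel measurable map. Define q : X × X → Y by q(x, x') = f(x + x') − f(x'). For a Borel probability measure μ on X, let μ̄ = q_*(μ × λ_X) be the pushforward to Y of the product measure μ × λ_X. Then μ ↦ μ̄ is continuous at the point mass δ_{0_X} in the weak* topology: if (μ_k) is a sequence of Borel probability measures on X converging weakly to δ_{0_X}, then μ̄_k converges weakly to δ_{0_Y}. In particular δ̄_{0_X} = δ_{0_Y}. -/
open MeasureTheory

/-!
Write `q (x, u) = f (x + u) - f u`. For continuous `g` on `Y`, Fubini gives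
`∫ g d(q_*(μ × λ)) = ∫ G dμ` with `G x = ∫ g (f (x + u) - f u) dλ(u)`, and `G 0 = g 0` because
`λ` is a probability measure. So everything reduces to the continuity of `G`, which holds
although `f` is merely measurable: `G x = ∫ k (x + u) (f u) dλ(u)` for the bounded measurable
`k u = g (f u - ·) : C(Y, ℝ)`, translation `x ↦ k (x + ·)` is continuous into `L¹(λ; C(Y, ℝ))`,
and `m ↦ ∫ m u (f u) dλ(u)` is `1`-Lipschitz on that space.
-/

section IntegralCoeFnApply

variable {α Z : Type*} [MeasurableSpace α] {μ : Measure α}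
  [TopologicalSpace Z] [CompactSpace Z] [TopologicalSpace.PseudoMetrizableSpace Z]
  [MeasurableSpace Z] [OpensMeasurableSpace Z] {h : α → Z}

theorem integrable_coeFn_apply (m : Lp C(Z, ℝ) 1 μ) (hh : Measurable h) :
    Integrable (fun u => m u (h u)) μ := by
  refine Integrable.mono' (L1.integrable_coeFn m).norm ?_ (.of_forall fun u => ?_)
  · exact continuous_eval.comp_aestronglyMeasurable
      ((Lp.aestronglyMeasurable m).prodMk hh.aestronglyMeasurable)
  · exact (m u).norm_coe_le_norm (h u)

theorem lipschitzWith_integral_coeFn_apply (hh : Measurable h) :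
    LipschitzWith 1 fun m : Lp C(Z, ℝ) 1 μ => ∫ u, m u (h u) ∂μ := by
  refine LipschitzWith.of_dist_le_mul fun m m' => ?_
  rw [NNReal.coe_one, one_mul, dist_eq_norm, dist_eq_norm, L1.norm_eq_integral_norm,
    ← integral_sub (integrable_coeFn_apply m hh) (integrable_coeFn_apply m' hh)]
  refine (norm_integral_le_integral_norm _).trans <| integral_mono_ae
    ((integrable_coeFn_apply m hh).sub (integrable_coeFn_apply m' hh)).norm
    (L1.integrable_coeFn (m - m')).norm ?_
  filter_upwards [Lp.coeFn_sub m m'] with u hu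
  rw [hu]
  exact (m u - m' u).norm_coe_le_norm (h u)

end IntegralCoeFnApply

theorem continuous_integral_apply_add_apply {X Z : Type*}
    [TopologicalSpace X] [AddGroup X] [IsTopologicalAddGroup X] [MeasurableSpace X] [BorelSpace X]
    [TopologicalSpace Z] [CompactSpace Z] [TopologicalSpace.PseudoMetrizableSpace Z]
    [MeasurableSpace Z] [OpensMeasurableSpace Z]
    {μ : Measure X} [IsFiniteMeasure μ] [μ.IsAddLeftInvariant] [μ.InnerRegularCompactLTTop]
    {k : X → C(Z, ℝ)} {h : X → Z} (hk : MemLp k 1 μ) (hh : Measurable h) :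
    Continuous fun x => ∫ u, k (x + u) (h u) ∂μ := by
  let translate : C(X, C(X, X)) :=
    (ContinuousMap.mk (fun p : X × X => p.1 + p.2) continuous_add).curry
  have hmp (x : X) : MeasurePreserving (translate x) μ μ := measurePreserving_add_left μ x
  have hcont : Continuous fun x => Lp.compMeasurePreserving (translate x) (hmp x) (hk.toLp k) :=
    continuous_const.compMeasurePreservingLp translate.continuous hmp ENNReal.one_ne_top
  refine ((lipschitzWith_integral_coeFn_apply hh).continuous.comp hcont).congr fun x => ?_
  refine integral_congr_ae ?_
  filter_upwards [Lp.coeFn_compMeasurePreserving (hk.toLp k) (hmp x),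
    hk.coeFn_toLp.comp_tendsto (hmp x).quasiMeasurePreserving.tendsto_ae] with u hu hu'
  exact congrArg (· (h u)) (hu.trans hu')

theorem continuous_integral_comp_apply_add_sub_apply {X Y : Type*}
    [TopologicalSpace X] [AddGroup X] [IsTopologicalAddGroup X] [MeasurableSpace X] [BorelSpace X]
    [TopologicalSpace Y] [AddGroup Y] [IsTopologicalAddGroup Y] [CompactSpace Y]
    [SecondCountableTopology Y] [MeasurableSpace Y] [OpensMeasurableSpace Y]
    {μ : Measure X} [IsFiniteMeasure μ] [μ.IsAddLeftInvariant] [μ.InnerRegularCompactLTTop]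
    {f : X → Y} (hf : Measurable f) {g : Y → ℝ} (hg : Continuous g) :
    Continuous fun x => ∫ u, g (f (x + u) - f u) ∂μ := by
  let Φ : C(Y, C(Y, ℝ)) := ContinuousMap.curry ⟨fun p : Y × Y => g (p.1 - p.2), by fun_prop⟩
  have hk : MemLp (Φ ∘ f) 1 μ :=
    .of_bound (Φ.continuous.comp_stronglyMeasurable hf.stronglyMeasurable).aestronglyMeasurable
      ‖Φ‖ (.of_forall fun u => Φ.norm_coe_le_norm (f u))
  exact continuous_integral_apply_add_apply hk hf

theorem integral_map_prod_eq_integral_integral {α β Y : Type*} [MeasurableSpace α]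
    [MeasurableSpace β] {μ : Measure α} {ν : Measure β} [IsFiniteMeasure μ] [IsFiniteMeasure ν]
    [TopologicalSpace Y] [CompactSpace Y] [MeasurableSpace Y] [OpensMeasurableSpace Y]
    {q : α × β → Y} (hq : Measurable q) {g : Y → ℝ} (hg : Continuous g) :
    ∫ y, g y ∂(μ.prod ν).map q = ∫ x, ∫ u, g (q (x, u)) ∂ν ∂μ := by
  rw [integral_map hq.aemeasurable hg.measurable.aestronglyMeasurable]
  obtain ⟨C, hC⟩ := isCompact_univ.exists_bound_of_continuousOn hg.continuousOn
  refine integral_prod _ (Integrable.mono' (integrable_const C) ?_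
    (.of_forall fun p => hC _ (Set.mem_univ _)))
  exact (hg.measurable.comp hq).aestronglyMeasurable

theorem stmt14_general {X Y : Type} [TopologicalSpace X] [AddCommGroup X] [IsTopologicalAddGroup X]
    [CompactSpace X] [SecondCountableTopology X] [MeasurableSpace X] [BorelSpace X]
    [TopologicalSpace Y] [AddCommGroup Y] [IsTopologicalAddGroup Y]
    [CompactSpace Y] [SecondCountableTopology Y] [MeasurableSpace Y] [BorelSpace Y]
    (lamX : Measure X) [lamX.IsAddHaarMeasure] [IsProbabilityMeasure lamX]
    (f : X → Y) (hf : Measurable f) :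
    (∀ (μs : ℕ → Measure X), (∀ k, IsProbabilityMeasure (μs k)) →
      (∀ g : X → ℝ, Continuous g →
        Filter.Tendsto (fun k => ∫ x, g x ∂(μs k)) Filter.atTop (nhds (g 0))) →
      ∀ g : Y → ℝ, Continuous g →
        Filter.Tendsto
          (fun k => ∫ y, g y
            ∂(Measure.map (fun p : X × X => f (p.1 + p.2) - f p.2) ((μs k).prod lamX)))
          Filter.atTop (nhds (g 0))) ∧
    Measure.map (fun p : X × X => f (p.1 + p.2) - f p.2)
        ((Measure.dirac (0 : X)).prod lamX) =
      Measure.dirac (0 : Y) := by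
  have hq : Measurable fun p : X × X => f (p.1 + p.2) - f p.2 := by fun_prop
  refine ⟨fun μs hμs hconv g hg => ?_, ?_⟩
  · have hG := hconv _ (continuous_integral_comp_apply_add_sub_apply (μ := lamX) hf hg)
    simp only [zero_add, sub_self, integral_const, probReal_univ, one_smul] at hG
    refine hG.congr fun k => ?_
    have := hμs k
    exact (integral_map_prod_eq_integral_integral hq hg).symm
  · rw [Measure.dirac_prod, Measure.map_map hq measurable_prodMk_left]
    simp [Function.comp_def, Measure.map_const]

/-- Let `X`, `Y` be (infinite) compact metrizable abelian groups,
`λ_X` the normalized Haar measure on `X`, and `f : X → Y` Borel measurable.  Define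
`q : X × X → Y` by `q(x, x') = f(x + x') − f(x')`, and for a Borel probability measure
`μ` on `X` let `μ̄ = q_*(μ × λ_X)`.  Then `μ ↦ μ̄` is weak*-continuous at `δ_{0_X}`:
if a sequence `(μ_k)` of Borel probability measures converges weakly to `δ_{0_X}`, then
`μ̄_k` converges weakly to `δ_{0_Y}`.  In particular `δ̄_{0_X} = δ_{0_Y}`. -/
theorem stmt14 {X Y : Type} [TopologicalSpace X] [AddCommGroup X] [IsTopologicalAddGroup X]
    [CompactSpace X] [TopologicalSpace.MetrizableSpace X]
    [SecondCountableTopology X] [Infinite X] [MeasurableSpace X] [BorelSpace X]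
    [TopologicalSpace Y] [AddCommGroup Y] [IsTopologicalAddGroup Y]
    [CompactSpace Y] [TopologicalSpace.MetrizableSpace Y]
    [SecondCountableTopology Y] [Infinite Y] [MeasurableSpace Y] [BorelSpace Y]
    (lamX : Measure X) [lamX.IsAddHaarMeasure] [IsProbabilityMeasure lamX]
    (f : X → Y) (hf : Measurable f) :
    (∀ (μs : ℕ → Measure X), (∀ k, IsProbabilityMeasure (μs k)) →
      (∀ g : X → ℝ, Continuous g →
        Filter.Tendsto (fun k => ∫ x, g x ∂(μs k)) Filter.atTop (nhds (g 0))) →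
      ∀ g : Y → ℝ, Continuous g →
        Filter.Tendsto
          (fun k => ∫ y, g y
            ∂(Measure.map (fun p : X × X => f (p.1 + p.2) - f p.2) ((μs k).prod lamX)))
          Filter.atTop (nhds (g 0))) ∧
    Measure.map (fun p : X × X => f (p.1 + p.2) - f p.2)
        ((Measure.dirac (0 : X)).prod lamX) =
      Measure.dirac (0 : Y) :=
  stmt14_general lamX f hf
end
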